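/- arXiv:math/9406227 — 4 statements merged into one kernel-verified Lean document; each statement's English description precedes it below -/
import Mathlib

section
/- Let f and g be functions analytic in an annulus containing q ≤ |z| ≤ q^{-1}, let ḡ denote the function whose Laurent coefficients are the complex conjugates of those of g, and define the inner product ⟨f,g⟩ = (1/(2πi)) ∮_{|z|=1} f(z) \overline{g(z)} dz/z. Then ⟨D_{q,z} f, g⟩ = ⟨f, T_{q,z} g⟩, where (D_{q,z} f)(z) = (f(z)-f(qz))/((1-q)z) and (T_{q,z} g)(z) = z[g(z) - q g(qz)]/(1-q). -/
open Finset MeasureTheory intervalIntegral Complex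

/-- finite q-shifted factorial `(a;q)_n` -/
noncomputable def qPoch (q a : ℂ) (n : ℕ) : ℂ := ∏ k ∈ Finset.range n, (1 - a * q ^ k)

/-- infinite q-shifted factorial `(a;q)_∞` -/
noncomputable def qPochInf (q a : ℂ) : ℂ := ∏' k : ℕ, (1 - a * q ^ k)

/-- the q-difference operator `D_{q,z}` -/
noncomputable def Dq (q : ℂ) (f : ℂ → ℂ) : ℂ → ℂ := fun z => (f z - f (q * z)) / ((1 - q) * z)

/-- the operator `T_{q,z}` -/
noncomputable def Tq (q : ℂ) (f : ℂ → ℂ) : ℂ → ℂ := fun z => z * (f z - q * f (q * z)) / (1 - q)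

/-- the Szegő polynomials `H_n(z|q)`, with `s = q^{1/2}` -/
noncomputable def szH (q s : ℂ) (n : ℕ) : ℂ → ℂ := fun z =>
  ∑ k ∈ Finset.range (n + 1), qPoch q q n / (qPoch q q k * qPoch q q (n - k)) * (z / s) ^ k

/-- the Szegő weight `w_c(z|q) = (q^{1/2}z;q)_∞ (q^{1/2}/z;q)_∞`, with `s = q^{1/2}` -/
noncomputable def wc (q s : ℂ) : ℂ → ℂ := fun z => qPochInf q (s * z) * qPochInf q (s / z)

open Filter Topology

lemma hasDerivAt_conjConj {g : ℂ → ℂ} {z d : ℂ}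
    (h : HasDerivAt g d ((starRingEnd ℂ) z)) :
    HasDerivAt (fun w => (starRingEnd ℂ) (g ((starRingEnd ℂ) w))) ((starRingEnd ℂ) d) z := by
  rw [hasDerivAt_iff_tendsto_slope] at h ⊢
  have hc : Tendsto (starRingEnd ℂ) (𝓝[≠] z) (𝓝[≠] ((starRingEnd ℂ) z)) := by
    refine Tendsto.inf (Complex.continuous_conj.tendsto z) ?_
    refine tendsto_principal_principal.2 fun x hx hx' => hx ?_
    simpa using congrArg (starRingEnd ℂ) hx'
  have h2 := (Complex.continuous_conj.tendsto d).comp (h.comp hc)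
  refine h2.congr fun w => ?_
  simp [Function.comp, slope_def_field, map_div₀]

theorem stmt1 (q : ℝ) (hq : 0 < q) (hq1 : q < 1) (f g : ℂ → ℂ)
    (hf : AnalyticOnNhd ℂ f {z : ℂ | q ≤ ‖z‖ ∧ ‖z‖ ≤ q⁻¹})
    (hg : AnalyticOnNhd ℂ g {z : ℂ | q ≤ ‖z‖ ∧ ‖z‖ ≤ q⁻¹}) :
    (1 / (2 * Real.pi) : ℂ) * ∫ θ in (0:ℝ)..(2 * Real.pi),
        Dq (q : ℂ) f (Complex.exp (θ * Complex.I)) *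
          (starRingEnd ℂ) (g (Complex.exp (θ * Complex.I)))
      = (1 / (2 * Real.pi) : ℂ) * ∫ θ in (0:ℝ)..(2 * Real.pi),
          f (Complex.exp (θ * Complex.I)) *
            (starRingEnd ℂ) (Tq (q : ℂ) g (Complex.exp (θ * Complex.I))) := by
  have hq0 : (q : ℂ) ≠ 0 := by exact_mod_cast hq.ne'
  have hq1c : (1 : ℂ) - (q : ℂ) ≠ 0 := by
    rw [sub_ne_zero]
    exact_mod_cast hq1.ne'
  have hqinvpos : 0 < q⁻¹ := inv_pos.mpr hq
  have hqq : q * q⁻¹ = 1 := mul_inv_cancel₀ hq.ne'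
  have hqinv : 1 ≤ q⁻¹ := by nlinarith
  set S : Set ℂ := {z : ℂ | q ≤ ‖z‖ ∧ ‖z‖ ≤ q⁻¹} with hS
  have hmem : ∀ z : ℂ, q ≤ ‖z‖ → ‖z‖ ≤ 1 → z ∈ S :=
    fun z h1 h2 => ⟨h1, h2.trans hqinv⟩
  set e : ℝ → ℂ := fun θ => Complex.exp (θ * Complex.I) with he
  have habs : ∀ θ : ℝ, ‖e θ‖ = 1 := fun θ => Complex.norm_exp_ofReal_mul_I θ
  have he0 : ∀ θ, e θ ≠ 0 := fun θ => Complex.exp_ne_zero _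
  have heS : ∀ θ, e θ ∈ S := fun θ => hmem _ (by rw [habs]; exact hq1.le) (by rw [habs])
  have habsq : ∀ θ : ℝ, ‖(q : ℂ) * e θ‖ = q := by
    intro θ
    rw [norm_mul, habs, Complex.norm_real, Real.norm_eq_abs, abs_of_pos hq, mul_one]
  have hqeS : ∀ θ, (q : ℂ) * e θ ∈ S := fun θ =>
    hmem _ (le_of_eq (habsq θ).symm) (by rw [habsq]; exact hq1.le)
  set gs : ℂ → ℂ := fun z => (starRingEnd ℂ) (g ((starRingEnd ℂ) z)) with hgs_def
  have hgs : ∀ z : ℂ, (starRingEnd ℂ) z ∈ S → DifferentiableAt ℂ gs z := fun z hz =>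
    (hasDerivAt_conjConj ((hg _ hz).differentiableAt.hasDerivAt)).differentiableAt
  have hconj_e : ∀ θ : ℝ, (starRingEnd ℂ) (e θ) = (e θ)⁻¹ := by
    intro θ
    rw [he, ← Complex.exp_conj, ← Complex.exp_neg]
    congr 1
    simp
  have hconj_einv : ∀ θ : ℝ, (starRingEnd ℂ) ((e θ)⁻¹) = e θ := by
    intro θ; rw [map_inv₀, hconj_e, inv_inv]
  have hgconj : ∀ θ, (starRingEnd ℂ) (g (e θ)) = gs ((e θ)⁻¹) := by
    intro θ; rw [hgs_def]; simp only []; rw [hconj_einv]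
  have hgqconj : ∀ θ, (starRingEnd ℂ) (g ((q : ℂ) * e θ)) = gs ((q : ℂ) * (e θ)⁻¹) := by
    intro θ; rw [hgs_def]; simp only []
    rw [map_mul, hconj_einv, Complex.conj_ofReal]
  -- the two auxiliary integrands
  set C₁ : ℝ → ℂ := fun θ => (e θ)⁻¹ * f ((q : ℂ) * e θ) * gs ((e θ)⁻¹) with hC₁
  set C₂ : ℝ → ℂ := fun θ => (e θ)⁻¹ * f (e θ) * gs ((q : ℂ) * (e θ)⁻¹) with hC₂
  -- Cauchy's theorem on the annulus for Φ
  set Φ : ℂ → ℂ := fun z => f z * gs ((q : ℂ) / z) * (z ^ 2)⁻¹ with hΦ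
  have hΦdiff : ∀ z ∈ Metric.closedBall (0 : ℂ) 1 \ Metric.ball (0 : ℂ) q,
      DifferentiableAt ℂ Φ z := by
    intro z hz
    obtain ⟨hz1, hz2⟩ := hz
    rw [Metric.mem_closedBall, Complex.dist_eq, sub_zero] at hz1
    rw [Metric.mem_ball, Complex.dist_eq, sub_zero, not_lt] at hz2
    have habz : 0 < ‖z‖ := lt_of_lt_of_le hq hz2
    have hz0 : z ≠ 0 := by
      intro h; rw [h] at habz; simp at habz
    have h1 : DifferentiableAt ℂ f z := (hf z (hmem z hz2 hz1)).differentiableAt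
    have hinner : DifferentiableAt ℂ (fun w => (q : ℂ) / w) z :=
      (differentiableAt_const _).div differentiableAt_id hz0
    have hqzS : (starRingEnd ℂ) ((q : ℂ) / z) ∈ S := by
      have habsqz : ‖(starRingEnd ℂ) ((q : ℂ) / z)‖ = q / ‖z‖ := by
        rw [Complex.norm_conj, norm_div, Complex.norm_real, Real.norm_eq_abs, abs_of_pos hq]
      constructor
      · rw [habsqz, le_div_iff₀ habz]
        nlinarith
      · rw [habsqz]
        refine le_trans ?_ hqinv
        rw [div_le_one habz]
        exact hz2
    have h2 : DifferentiableAt ℂ (fun w => gs ((q : ℂ) / w)) z :=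
      (hgs _ hqzS).comp z hinner
    have h3 : DifferentiableAt ℂ (fun w => (w ^ 2)⁻¹) z :=
      (differentiableAt_pow 2).inv (pow_ne_zero 2 hz0)
    exact (h1.mul h2).mul h3
  have hcauchy : (∮ z in C(0, (1:ℝ)), Φ z) = ∮ z in C(0, q), Φ z := by
    refine Complex.circleIntegral_eq_of_differentiable_on_annulus_off_countable hq hq1.le
      Set.countable_empty (fun z hz => (hΦdiff z hz).continuousAt.continuousWithinAt)
      (fun z hz => hΦdiff z ⟨Metric.ball_subset_closedBall hz.1.1,
        fun h => hz.1.2 (Metric.ball_subset_closedBall h)⟩)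
  have heθ : ∀ θ : ℝ, Complex.exp ((θ : ℂ) * Complex.I) = e θ := fun _ => rfl
  have h1 : (∮ z in C(0, (1:ℝ)), Φ z)
      = Complex.I * ∫ θ in (0:ℝ)..(2 * Real.pi), C₂ θ := by
    rw [circleIntegral, ← intervalIntegral.integral_const_mul]
    refine intervalIntegral.integral_congr fun θ _ => ?_
    simp only [deriv_circleMap, hΦ, hC₂, smul_eq_mul, circleMap, Complex.ofReal_one,
      zero_add, one_mul, heθ, div_eq_mul_inv]
    field_simp [he0 θ]
  have h2 : (∮ z in C(0, q), Φ z)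
      = Complex.I * (q : ℂ)⁻¹ * ∫ θ in (0:ℝ)..(2 * Real.pi), C₁ θ := by
    rw [circleIntegral, ← intervalIntegral.integral_const_mul]
    refine intervalIntegral.integral_congr fun θ _ => ?_
    simp only [deriv_circleMap, hΦ, hC₁, smul_eq_mul, circleMap, zero_add, heθ,
      div_mul_eq_div_div, div_self hq0, one_div]
    field_simp [he0 θ]
  have key : (∫ θ in (0:ℝ)..(2 * Real.pi), C₁ θ)
      = (q : ℂ) * ∫ θ in (0:ℝ)..(2 * Real.pi), C₂ θ := by
    rw [h1, h2] at hcauchy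
    have h3 := mul_left_cancel₀ Complex.I_ne_zero (by rw [hcauchy]; ring :
      Complex.I * (∫ θ in (0:ℝ)..(2 * Real.pi), C₂ θ)
        = Complex.I * ((q : ℂ)⁻¹ * ∫ θ in (0:ℝ)..(2 * Real.pi), C₁ θ))
    rw [h3, ← mul_assoc, mul_inv_cancel₀ hq0, one_mul]
  -- continuity statements
  have hce : Continuous e := by
    rw [he]; exact (Complex.continuous_ofReal.mul continuous_const).cexp
  have hceinv : Continuous fun θ => (e θ)⁻¹ := hce.inv₀ he0
  have hcf : Continuous fun θ => f (e θ) :=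
    continuous_iff_continuousAt.2 fun θ =>
      ((hf _ (heS θ)).differentiableAt.continuousAt).comp hce.continuousAt
  have hcfq : Continuous fun θ => f ((q : ℂ) * e θ) := by
    refine continuous_iff_continuousAt.2 fun θ => ?_
    exact ContinuousAt.comp (f := fun θ : ℝ => (q : ℂ) * e θ)
      (hf _ (hqeS θ)).differentiableAt.continuousAt
      ((continuous_const.mul hce).continuousAt)
  have hcg : Continuous fun θ => g (e θ) :=
    continuous_iff_continuousAt.2 fun θ =>
      ((hg _ (heS θ)).differentiableAt.continuousAt).comp hce.continuousAt
  have hcgq : Continuous fun θ => g ((q : ℂ) * e θ) := by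
    refine continuous_iff_continuousAt.2 fun θ => ?_
    exact ContinuousAt.comp (f := fun θ : ℝ => (q : ℂ) * e θ)
      (hg _ (hqeS θ)).differentiableAt.continuousAt
      ((continuous_const.mul hce).continuousAt)
  have hcgs1 : Continuous fun θ => gs ((e θ)⁻¹) := by
    have : (fun θ => gs ((e θ)⁻¹)) = fun θ => (starRingEnd ℂ) (g (e θ)) := by
      funext θ; rw [hgconj]
    rw [this]; exact Complex.continuous_conj.comp hcg
  have hcgs2 : Continuous fun θ => gs ((q : ℂ) * (e θ)⁻¹) := by
    have : (fun θ => gs ((q : ℂ) * (e θ)⁻¹)) = fun θ => (starRingEnd ℂ) (g ((q : ℂ) * e θ)) := by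
      funext θ; rw [hgqconj]
    rw [this]; exact Complex.continuous_conj.comp hcgq
  have hiC₁ : IntervalIntegrable C₁ volume 0 (2 * Real.pi) :=
    ((hceinv.mul hcfq).mul hcgs1).intervalIntegrable _ _
  have hiC₂ : IntervalIntegrable C₂ volume 0 (2 * Real.pi) :=
    ((hceinv.mul hcf).mul hcgs2).intervalIntegrable _ _
  have hiB : IntervalIntegrable
      (fun θ => f (e θ) * (starRingEnd ℂ) (Tq (q : ℂ) g (e θ))) volume 0 (2 * Real.pi) := by
    refine Continuous.intervalIntegrable ?_ _ _
    refine hcf.mul (Complex.continuous_conj.comp ?_)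
    simp only [Tq]
    exact ((hce.mul (hcg.sub (continuous_const.mul hcgq))).div_const _)
  -- pointwise identity
  have hA : ∀ θ : ℝ, Dq (q : ℂ) f (e θ) * (starRingEnd ℂ) (g (e θ))
      = f (e θ) * (starRingEnd ℂ) (Tq (q : ℂ) g (e θ))
        + (1 - (q : ℂ))⁻¹ * ((q : ℂ) * C₂ θ - C₁ θ) := by
    intro θ
    simp only [Dq, Tq, hC₁, hC₂, map_div₀, map_mul, map_sub, map_one,
      Complex.conj_ofReal, hconj_e θ, hgconj θ, hgqconj θ]
    field_simp [he0 θ, hq1c]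
    ring
  congr 1
  calc (∫ θ in (0:ℝ)..(2 * Real.pi), Dq (q : ℂ) f (e θ) * (starRingEnd ℂ) (g (e θ)))
      = ∫ θ in (0:ℝ)..(2 * Real.pi),
          (f (e θ) * (starRingEnd ℂ) (Tq (q : ℂ) g (e θ))
            + (1 - (q : ℂ))⁻¹ * ((q : ℂ) * C₂ θ - C₁ θ)) :=
        intervalIntegral.integral_congr fun θ _ => hA θ
    _ = (∫ θ in (0:ℝ)..(2 * Real.pi), f (e θ) * (starRingEnd ℂ) (Tq (q : ℂ) g (e θ)))
          + (1 - (q : ℂ))⁻¹ * ((q : ℂ) * (∫ θ in (0:ℝ)..(2 * Real.pi), C₂ θ)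
            - ∫ θ in (0:ℝ)..(2 * Real.pi), C₁ θ) := by
        rw [intervalIntegral.integral_add hiB
          ((((hiC₂.const_mul _).sub hiC₁).const_mul _)),
          intervalIntegral.integral_const_mul,
          intervalIntegral.integral_sub (hiC₂.const_mul _) hiC₁,
          intervalIntegral.integral_const_mul]
    _ = ∫ θ in (0:ℝ)..(2 * Real.pi), f (e θ) * (starRingEnd ℂ) (Tq (q : ℂ) g (e θ)) := by
        rw [key]; ring
end

section
/- With w_c(z|q) = (q^{1/2} z; q)_∞ (q^{1/2}/z; q)_∞ and H_n(z|q) = Σ_{k=0}^n [(q;q)_n/((q;q)_k (q;q)_{n-k})] (q^{-1/2} z)^k, the raising identity T_{q,z}( w_c(z|q) H_n(z|q) ) = (√q/(1-q)) · w_c(z|q) · H_{n+1}(z|q) holds for all z ≠ 0 and all n ≥ 0. -/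
open Finset MeasureTheory intervalIntegral Complex

set_option maxHeartbeats 1000000

section aux
variable {q : ℝ}

lemma mult_aux (hq : 0 < q) (hq1 : q < 1) (a : ℂ) : Multipliable (fun k : ℕ => 1 - a * (q : ℂ) ^ k) := by
  by_cases h : ∃ k, 1 - a * (q : ℂ) ^ k = 0
  · obtain ⟨k0, hk0⟩ := h
    refine ⟨0, ?_⟩
    have hEq : (fun _ : Finset ℕ => (0 : ℂ)) =ᶠ[Filter.atTop]
        (fun s => ∏ i ∈ s, (1 - a * (q : ℂ) ^ i)) := by
      filter_upwards [Filter.eventually_ge_atTop ({k0} : Finset ℕ)] with s hs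
      exact (Finset.prod_eq_zero (hs (Finset.mem_singleton_self k0)) hk0).symm
    exact Filter.Tendsto.congr' hEq tendsto_const_nhds
  · push_neg at h
    have hsum : Summable (fun k : ℕ => Complex.log (1 - a * (q : ℂ) ^ k)) := by
      have hg : Summable (fun k : ℕ => 3/2 * ‖a‖ * q ^ k) :=
        (summable_geometric_of_lt_one hq.le hq1).mul_left _
      refine Summable.of_norm_bounded_eventually_nat hg ?_
      have htend : Filter.Tendsto (fun k : ℕ => ‖a‖ * q ^ k) Filter.atTop (nhds 0) := by
        simpa using (tendsto_pow_atTop_nhds_zero_of_lt_one hq.le hq1).const_mul ‖a‖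
      have hev : ∀ᶠ k in Filter.atTop, ‖a‖ * q ^ k ≤ 1/2 := by
        filter_upwards [htend.eventually_le_const (by norm_num : (0:ℝ) < 1/2)] with k hk
        exact hk
      filter_upwards [hev] with k hk
      have hnorm : ‖-(a * (q : ℂ) ^ k)‖ = ‖a‖ * q ^ k := by
        rw [norm_neg, norm_mul, norm_pow, Complex.norm_real, Real.norm_eq_abs,
          abs_of_pos hq]
      have := Complex.norm_log_one_add_half_le_self (z := -(a * (q : ℂ) ^ k))
        (by rw [hnorm]; exact hk)
      rw [hnorm] at this
      calc ‖Complex.log (1 - a * (q:ℂ) ^ k)‖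
          = ‖Complex.log (1 + -(a * (q:ℂ) ^ k))‖ := by ring_nf
        _ ≤ 3/2 * (‖a‖ * q ^ k) := this
        _ = 3/2 * ‖a‖ * q ^ k := by ring
    exact Complex.multipliable_of_summable_log hsum

lemma shift_aux (hq : 0 < q) (hq1 : q < 1) (a : ℂ) : qPochInf (q : ℂ) a = (1 - a) * qPochInf (q : ℂ) (a * q) := by
  unfold qPochInf
  have h1 : Multipliable (fun n : ℕ => 1 - a * (q : ℂ) ^ (n + 1)) :=
    (mult_aux hq hq1 (a * q)).congr (fun n => by ring)
  rw [tprod_eq_zero_mul' h1]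
  congr 1
  · simp
  · exact tprod_congr (fun k => by ring)

end aux

section alg
variable {q : ℝ}

/-- coefficient -/
noncomputable def qc (q : ℂ) (n k : ℕ) : ℂ := qPoch q q n / (qPoch q q k * qPoch q q (n - k))

lemma qPoch_ne_zero (hq : 0 < q) (hq1 : q < 1) (m : ℕ) : qPoch (q : ℂ) (q : ℂ) m ≠ 0 := by
  unfold qPoch
  rw [Finset.prod_ne_zero_iff]
  intro k _
  have : (q : ℂ) * (q : ℂ) ^ k = ((q ^ (k+1) : ℝ) : ℂ) := by push_cast; ring
  rw [this, sub_ne_zero]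
  intro hcon
  have h1 : (1 : ℝ) = q ^ (k+1) := by exact_mod_cast hcon
  have hlt : q ^ (k+1) < 1 := pow_lt_one₀ hq.le hq1 (Nat.succ_ne_zero k)
  linarith

lemma qPoch_succ (m : ℕ) : qPoch (q : ℂ) (q : ℂ) (m + 1)
    = qPoch (q : ℂ) (q : ℂ) m * (1 - (q : ℂ) * (q : ℂ) ^ m) := by
  unfold qPoch; rw [Finset.prod_range_succ]

lemma qc_pascal (hq : 0 < q) (hq1 : q < 1) {k n : ℕ} (hk : k < n) :
    qc (q : ℂ) (n + 1) (k + 1) = (q : ℂ) ^ (k+1) * qc (q : ℂ) n (k + 1) + qc (q : ℂ) n k := by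
  obtain ⟨m, rfl⟩ : ∃ m, n = k + 1 + m := ⟨n - (k+1), by omega⟩
  have e1 : k + 1 + m + 1 - (k + 1) = m + 1 := by omega
  have e2 : k + 1 + m - (k + 1) = m := by omega
  have e3 : k + 1 + m - k = m + 1 := by omega
  unfold qc
  rw [e1, e2, e3]
  rw [show k + 1 + m + 1 = (k + 1 + m) + 1 from rfl, qPoch_succ (k+1+m), qPoch_succ k,
    qPoch_succ m]
  have hK := qPoch_ne_zero hq hq1 k
  have hM := qPoch_ne_zero hq hq1 m
  have hKM := qPoch_ne_zero hq hq1 (k+1+m)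
  have hk1 : (1 : ℂ) - (q:ℂ) * (q:ℂ)^k ≠ 0 := by
    have := qPoch_ne_zero hq hq1 (k+1); rw [qPoch_succ k] at this
    exact fun h => this (by rw [h, mul_zero])
  have hm1 : (1 : ℂ) - (q:ℂ) * (q:ℂ)^m ≠ 0 := by
    have := qPoch_ne_zero hq hq1 (m+1); rw [qPoch_succ m] at this
    exact fun h => this (by rw [h, mul_zero])
  field_simp
  ring
end alg

section keylem
variable {q : ℝ}

lemma qc_one_left (hq : 0 < q) (hq1 : q < 1) (m : ℕ) : qc (q:ℂ) m 0 = 1 := by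
  unfold qc
  rw [Nat.sub_zero, show qPoch (q:ℂ) (q:ℂ) 0 = 1 from rfl, one_mul,
    div_self (qPoch_ne_zero hq hq1 m)]

lemma qc_one_right (hq : 0 < q) (hq1 : q < 1) (m : ℕ) : qc (q:ℂ) m m = 1 := by
  unfold qc
  rw [Nat.sub_self, show qPoch (q:ℂ) (q:ℂ) 0 = 1 from rfl, mul_one,
    div_self (qPoch_ne_zero hq hq1 m)]

lemma qc_sum (hq : 0 < q) (hq1 : q < 1) (n : ℕ) (t : ℂ) :
    t * (∑ k ∈ Finset.range (n+1), qc (q:ℂ) n k * t ^ k)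
      + ∑ k ∈ Finset.range (n+1), qc (q:ℂ) n k * ((q:ℂ) * t) ^ k
    = ∑ k ∈ Finset.range (n+2), qc (q:ℂ) (n+1) k * t ^ k := by
  have hshift : t * (∑ k ∈ Finset.range (n+1), qc (q:ℂ) n k * t ^ k)
      = ∑ k ∈ Finset.range (n+1), qc (q:ℂ) n k * t ^ (k+1) := by
    rw [Finset.mul_sum]; exact Finset.sum_congr rfl fun k _ => by ring
  rw [hshift]
  rw [Finset.sum_range_succ' (fun k => qc (q:ℂ) (n+1) k * t ^ k) (n+1)]
  rw [Finset.sum_range_succ' (fun k => qc (q:ℂ) n k * ((q:ℂ) * t) ^ k) n]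
  rw [Finset.sum_range_succ (fun k => qc (q:ℂ) n k * t ^ (k+1)) n]
  rw [Finset.sum_range_succ (fun k => qc (q:ℂ) (n+1) (k+1) * t ^ (k+1)) n]
  rw [qc_one_right hq hq1 n, qc_one_right hq hq1 (n+1), qc_one_left hq hq1 n,
    qc_one_left hq hq1 (n+1)]
  have hcongr : ∀ k ∈ Finset.range n,
      qc (q:ℂ) n k * t ^ (k+1) + qc (q:ℂ) n (k+1) * ((q:ℂ) * t) ^ (k+1)
        = qc (q:ℂ) (n+1) (k+1) * t ^ (k+1) := by
    intro k hk
    rw [qc_pascal hq hq1 (Finset.mem_range.mp hk), mul_pow]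
    ring
  rw [← Finset.sum_congr rfl hcongr, Finset.sum_add_distrib]
  ring

lemma key_poly (hq : 0 < q) (hq1 : q < 1) (s : ℂ) (hs0 : s ≠ 0) (hss : s * s = (q:ℂ))
    (n : ℕ) (z : ℂ) (hz : z ≠ 0) :
    z * ((1 - s * z) * szH (q:ℂ) s n z - ((q:ℂ) - s / z) * szH (q:ℂ) s n ((q:ℂ) * z))
      = s * (1 - s * z) * szH (q:ℂ) s (n+1) z := by
  obtain ⟨t, rfl⟩ : ∃ t, z = s * t := ⟨z / s, by field_simp⟩
  have ht : t ≠ 0 := by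
    intro h; exact hz (by rw [h, mul_zero])
  have hsum := qc_sum hq hq1 n t
  simp only [qc] at hsum
  have e1 : s * t / s = t := by field_simp
  have e2 : (q:ℂ) * (s * t) / s = (q:ℂ) * t := by field_simp
  unfold szH
  rw [e1, e2, ← hsum]
  rw [← hss]
  field_simp
  ring

end keylem

theorem stmt3 (q : ℝ) (hq : 0 < q) (hq1 : q < 1) (n : ℕ) (z : ℂ) (hz : z ≠ 0) :
    Tq (q : ℂ) (fun w => wc (q : ℂ) (Real.sqrt q : ℂ) w * szH (q : ℂ) (Real.sqrt q : ℂ) n w) z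
      = (Real.sqrt q : ℂ) / (1 - (q : ℂ)) * wc (q : ℂ) (Real.sqrt q : ℂ) z *
          szH (q : ℂ) (Real.sqrt q : ℂ) (n + 1) z := by
  set s : ℂ := (Real.sqrt q : ℂ) with hs
  have hss : s * s = (q : ℂ) := by
    rw [hs, ← Complex.ofReal_mul, Real.mul_self_sqrt hq.le]
  have hs0 : s ≠ 0 := by
    rw [hs, Complex.ofReal_ne_zero]
    exact Real.sqrt_ne_zero'.mpr hq
  have hq0 : (q : ℂ) ≠ 0 := by
    rw [Complex.ofReal_ne_zero]; exact ne_of_gt hq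
  have h1q : (1 : ℂ) - (q : ℂ) ≠ 0 := by
    rw [show (1 : ℂ) - (q : ℂ) = ((1 - q : ℝ) : ℂ) from by push_cast; ring,
      Complex.ofReal_ne_zero]
    linarith
  have hwz : wc (q:ℂ) s z = (1 - s * z) * (qPochInf (q:ℂ) (s * z * q) * qPochInf (q:ℂ) (s / z)) := by
    unfold wc
    rw [shift_aux hq hq1 (s * z)]
    ring
  have hwqz : wc (q:ℂ) s ((q:ℂ) * z)
      = (1 - s / ((q:ℂ) * z)) * (qPochInf (q:ℂ) (s * z * q) * qPochInf (q:ℂ) (s / z)) := by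
    unfold wc
    rw [shift_aux hq hq1 (s / ((q:ℂ) * z)),
      show s / ((q:ℂ) * z) * (q:ℂ) = s / z from by field_simp,
      show s * ((q:ℂ) * z) = s * z * (q:ℂ) from by ring]
    ring
  have hq2 : (q:ℂ) * (1 - s / ((q:ℂ) * z)) = (q:ℂ) - s / z := by
    field_simp
  have hkey := key_poly hq hq1 s hs0 hss n z hz
  simp only [Tq]
  rw [hwz, hwqz]
  set A := qPochInf (q:ℂ) (s * z * (q:ℂ)) * qPochInf (q:ℂ) (s / z) with hA
  linear_combination ((1 - (q:ℂ))⁻¹ * A) * hkey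
    - ((1 - (q:ℂ))⁻¹ * A * z * szH (q:ℂ) s n ((q:ℂ) * z)) * hq2
end

section
/- The Szegő polynomials satisfy the orthogonality relation (1/(2πi)) ∮_{|z|=1} \overline{H_m(z|q)} H_n(z|q) w_c(z|q) dz/z = q^{-n} (q;q)_n / (q;q)_∞ · δ_{m,n}, where on |z| = 1, \overline{H_m(z|q)} = H_m(1/z|q) since the coefficients of H_m are real. -/
open Finset MeasureTheory intervalIntegral Complex

namespace SzegoAux

lemma qPoch_succ (q a : ℂ) (n : ℕ) :
    qPoch q a (n + 1) = qPoch q a n * (1 - a * q ^ n) := Finset.prod_range_succ _ _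

lemma qPoch_zero (q a : ℂ) : qPoch q a 0 = 1 := by simp [qPoch]

lemma one_sub_ne_zero {w : ℂ} (hw : ‖w‖ < 1) : (1 : ℂ) - w ≠ 0 := by
  intro h
  have : w = 1 := by linear_combination -h
  rw [this] at hw; simp at hw

lemma qPochq_ne_zero {q : ℂ} (hq : ‖q‖ < 1) (n : ℕ) : qPoch q q n ≠ 0 := by
  rw [qPoch]
  apply Finset.prod_ne_zero_iff.2
  intro k _
  apply one_sub_ne_zero
  have h1 : ‖q * q ^ k‖ = ‖q‖ ^ (k + 1) := by rw [norm_mul, norm_pow, pow_succ, mul_comm]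
  rw [h1]
  exact pow_lt_one₀ (norm_nonneg q) hq (Nat.succ_ne_zero k)

/-- Gaussian binomial coefficient (as ratio of q-Pochhammer symbols). -/
noncomputable def gbc (q : ℂ) (N j : ℕ) : ℂ :=
  if j ≤ N then qPoch q q N / (qPoch q q j * qPoch q q (N - j)) else 0

lemma gbc_zero {q : ℂ} (hq : ‖q‖ < 1) (N : ℕ) : gbc q N 0 = 1 := by
  rw [gbc, if_pos (Nat.zero_le _), Nat.sub_zero, qPoch_zero, one_mul,
    div_self (qPochq_ne_zero hq N)]

lemma gbc_self {q : ℂ} (hq : ‖q‖ < 1) (N : ℕ) : gbc q N N = 1 := by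
  rw [gbc, if_pos le_rfl, Nat.sub_self, qPoch_zero, mul_one, div_self (qPochq_ne_zero hq N)]

lemma gbc_of_gt (q : ℂ) {N j : ℕ} (h : N < j) : gbc q N j = 0 := by
  simp [gbc, Nat.not_le.2 h]

lemma gbc_pascal {q : ℂ} (hq : ‖q‖ < 1) (N j : ℕ) :
    gbc q (N + 1) (j + 1) = gbc q N (j + 1) + q ^ (N - j) * gbc q N j := by
  rcases lt_trichotomy j N with hj | rfl | hj
  · -- j + 1 ≤ N
    obtain ⟨a, rfl⟩ : ∃ a, N = j + 1 + a := ⟨N - (j + 1), by omega⟩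
    have e1 : j + 1 + a - (j + 1) = a := by omega
    have e2 : j + 1 + a + 1 - (j + 1) = a + 1 := by omega
    have e3 : j + 1 + a - j = a + 1 := by omega
    rw [gbc, gbc, gbc, if_pos (by omega), if_pos (by omega), if_pos (by omega), e1, e2, e3]
    have hA := qPochq_ne_zero hq (j + 1 + a)
    have hE := qPochq_ne_zero hq j
    have hC := qPochq_ne_zero hq a
    have h1j : (1 : ℂ) - q * q ^ j ≠ 0 := by
      have := qPochq_ne_zero hq (j + 1)
      rw [qPoch_succ] at this
      exact fun h => this (by rw [h, mul_zero])
    have h1a : (1 : ℂ) - q * q ^ a ≠ 0 := by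
      have := qPochq_ne_zero hq (a + 1)
      rw [qPoch_succ] at this
      exact fun h => this (by rw [h, mul_zero])
    have h1ja : (1 : ℂ) - q * q ^ (j + 1 + a) ≠ 0 := by
      have := qPochq_ne_zero hq (j + 1 + a + 1)
      rw [qPoch_succ] at this
      exact fun h => this (by rw [h, mul_zero])
    rw [show j + 1 + a + 1 = (j + 1 + a) + 1 from rfl, qPoch_succ, qPoch_succ, qPoch_succ]
    field_simp
    ring_nf
  · -- j = N
    rw [gbc_self hq, gbc_of_gt q (by omega), gbc_self hq]
    simp
  · -- j > N
    rw [gbc_of_gt q (by omega), gbc_of_gt q (by omega), gbc_of_gt q (by omega)]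
    simp

/-- finite q-binomial theorem -/
lemma qbinom_expand {q : ℂ} (hq : ‖q‖ < 1) (N : ℕ) (x : ℂ) :
    ∏ k ∈ range N, (1 - x * q ^ k)
      = ∑ j ∈ range (N + 1), (-1) ^ j * q ^ (j.choose 2) * gbc q N j * x ^ j := by
  induction N with
  | zero => simp [gbc_zero hq]
  | succ N ih =>
    rw [Finset.prod_range_succ, ih]
    rw [Finset.sum_range_succ' (fun j => (-1) ^ j * q ^ (j.choose 2) * gbc q (N+1) j * x ^ j) (N+1)]
    have hch : ∀ j : ℕ, (j + 1).choose 2 = j.choose 2 + j := by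
      intro j
      rw [Nat.choose_succ_succ]
      simp [Nat.choose_one_right, Nat.add_comm]
    have hterm : ∀ j ∈ range (N + 1),
        (-1 : ℂ) ^ (j+1) * q ^ ((j+1).choose 2) * gbc q (N+1) (j+1) * x ^ (j+1)
          = (-1) ^ (j+1) * q ^ ((j+1).choose 2) * gbc q N (j+1) * x ^ (j+1)
            + (-(q ^ N * x)) * ((-1) ^ j * q ^ (j.choose 2) * gbc q N j * x ^ j) := by
      intro j hj
      have hjN : j ≤ N := by simpa using Nat.lt_succ_iff.1 (Finset.mem_range.1 hj)
      have hqq : q ^ (N - j) * q ^ j = q ^ N := by rw [← pow_add]; congr 1; omega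
      rw [gbc_pascal hq, hch]
      linear_combination (-((-1:ℂ)) ^ j) * q ^ (j.choose 2) * gbc q N j * x ^ (j+1) * hqq
    rw [Finset.sum_congr rfl hterm, Finset.sum_add_distrib]
    have h1 : ∑ j ∈ range (N+1),
        (-1:ℂ) ^ (j+1) * q ^ ((j+1).choose 2) * gbc q N (j+1) * x ^ (j+1)
        = ∑ j ∈ range (N+1+1), (-1:ℂ) ^ j * q ^ (j.choose 2) * gbc q N j * x ^ j
          - (-1) ^ 0 * q ^ (Nat.choose 0 2) * gbc q N 0 * x ^ 0 := by
      rw [Finset.sum_range_succ' (fun j => (-1:ℂ) ^ j * q ^ (j.choose 2) * gbc q N j * x ^ j) (N+1)]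
      ring
    rw [h1]
    rw [Finset.sum_range_succ (fun j => (-1:ℂ) ^ j * q ^ (j.choose 2) * gbc q N j * x ^ j) (N+1)]
    rw [gbc_of_gt q (by omega), gbc_zero hq, gbc_zero hq]
    rw [← Finset.mul_sum]
    ring

lemma two_choose (n : ℕ) : 2 * (n.choose 2 : ℤ) = n * (n - 1) := by
  induction n with
  | zero => simp
  | succ n ih =>
    rw [Nat.choose_succ_succ, Nat.choose_one_right]
    push_cast
    push_cast at ih
    linarith

lemma pochRatio {q : ℂ} (i : ℕ) : ∀ n : ℕ,
    qPoch q q i * ∏ u ∈ range n, (1 - q ^ (n + i - u)) = qPoch q q (n + i)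
  | 0 => by simp
  | n + 1 => by
    have h1 : ∀ u, n + 1 + i - (u + 1) = n + i - u := by omega
    have h0 : n + 1 + i - 0 = (n + i) + 1 := by omega
    rw [Finset.prod_range_succ' (fun u => 1 - q ^ (n + 1 + i - u)) n]
    simp only [h1, h0]
    rw [show n + 1 + i = (n + i) + 1 from by omega, qPoch_succ, ← pochRatio i n, pow_succ']
    ring

lemma qPochInf_hasProd {q a : ℂ} (hq : ‖q‖ < 1) (ha : ‖a‖ < 1) :
    HasProd (fun k : ℕ => 1 - a * q ^ k) (qPochInf q a) ∧ qPochInf q a ≠ 0 := by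
  have hlt : ∀ k : ℕ, ‖a * q ^ k‖ < 1 := by
    intro k
    rw [norm_mul, norm_pow]
    calc ‖a‖ * ‖q‖ ^ k ≤ ‖a‖ * 1 := by
          gcongr
          exact pow_le_one₀ (norm_nonneg q) hq.le
    _ = ‖a‖ := mul_one _
    _ < 1 := ha
  have hne : ∀ k : ℕ, (1 : ℂ) - a * q ^ k ≠ 0 := fun k => one_sub_ne_zero (hlt k)
  have hsum : Summable (fun k : ℕ => Complex.log (1 - a * q ^ k)) := by
    obtain ⟨N₀, hN₀⟩ : ∃ N₀ : ℕ, ‖a‖ * ‖q‖ ^ N₀ ≤ 1/2 := by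
      have h0 : Filter.Tendsto (fun n : ℕ => ‖a‖ * ‖q‖ ^ n) Filter.atTop (nhds (‖a‖ * 0)) :=
        (tendsto_pow_atTop_nhds_zero_of_lt_one (norm_nonneg q) hq).const_mul _
      rw [mul_zero] at h0
      have := h0.eventually_le_const (by norm_num : (0:ℝ) < 1/2)
      exact this.exists
    apply (summable_nat_add_iff N₀).1
    apply Summable.of_norm_bounded (g := fun n : ℕ => 3/2 * (‖a‖ * ‖q‖ ^ N₀) * ‖q‖ ^ n)
      (((summable_geometric_of_lt_one (norm_nonneg q) hq).mul_left _))
    intro n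
    have hval : ‖a * q ^ (n + N₀)‖ = (‖a‖ * ‖q‖ ^ N₀) * ‖q‖ ^ n := by
      rw [norm_mul, norm_pow, pow_add]; ring
    have hhalf : ‖-(a * q ^ (n + N₀))‖ ≤ 1/2 := by
      rw [norm_neg, hval]
      calc (‖a‖ * ‖q‖ ^ N₀) * ‖q‖ ^ n ≤ (1/2) * 1 := by
            apply mul_le_mul hN₀ (pow_le_one₀ (norm_nonneg q) hq.le) (by positivity) (by norm_num)
      _ = 1/2 := by norm_num
    have : (1 : ℂ) - a * q ^ (n + N₀) = 1 + -(a * q ^ (n + N₀)) := by ring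
    rw [this]
    calc ‖Complex.log (1 + -(a * q ^ (n + N₀)))‖ ≤ 3/2 * ‖-(a * q ^ (n + N₀))‖ :=
          Complex.norm_log_one_add_half_le_self hhalf
    _ = 3/2 * (‖a‖ * ‖q‖ ^ N₀) * ‖q‖ ^ n := by rw [norm_neg, hval]; ring
  have hP : HasProd (fun k : ℕ => 1 - a * q ^ k)
      (Complex.exp (∑' k : ℕ, Complex.log (1 - a * q ^ k))) := by
    have h1 := hsum.hasSum.cexp
    have hfun : (Complex.exp ∘ fun k : ℕ => Complex.log (1 - a * q ^ k))
        = fun k : ℕ => 1 - a * q ^ k := funext fun k => Complex.exp_log (hne k)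
    rwa [hfun] at h1
  constructor
  · rw [qPochInf, hP.tprod_eq]; exact hP
  · rw [qPochInf, hP.tprod_eq]; exact Complex.exp_ne_zero _

lemma qPochInf_ne_zero {q a : ℂ} (hq : ‖q‖ < 1) (ha : ‖a‖ < 1) : qPochInf q a ≠ 0 :=
  (qPochInf_hasProd hq ha).2

lemma tendsto_prod_qPochInf {q a : ℂ} (hq : ‖q‖ < 1) (ha : ‖a‖ < 1) :
    Filter.Tendsto (fun N => ∏ k ∈ range N, (1 - a * q ^ k)) Filter.atTop
      (nhds (qPochInf q a)) :=
  (qPochInf_hasProd hq ha).1.tendsto_prod_nat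

lemma tendsto_qPoch {q : ℂ} (hq : ‖q‖ < 1) :
    Filter.Tendsto (fun N => qPoch q q N) Filter.atTop (nhds (qPochInf q q)) := by
  simpa [qPoch] using tendsto_prod_qPochInf hq hq

lemma integral_exp_int (t : ℤ) :
    (∫ θ in (0:ℝ)..(2*Real.pi), Complex.exp (t * θ * Complex.I))
      = if t = 0 then ((2*Real.pi : ℝ) : ℂ) else 0 := by
  rcases eq_or_ne t 0 with rfl | ht
  · simp
  · rw [if_neg ht]
    have hc : ((t : ℂ) * Complex.I) ≠ 0 :=
      mul_ne_zero (Int.cast_ne_zero.2 ht) Complex.I_ne_zero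
    have harg : ∀ θ : ℝ, (t : ℂ) * θ * Complex.I = ((t : ℂ) * Complex.I) * θ := by
      intro θ; ring
    simp_rw [harg]
    rw [integral_exp_mul_complex hc]
    have h2 : ((t:ℂ) * Complex.I) * ((2*Real.pi : ℝ) : ℂ) = (t : ℂ) * (2 * (Real.pi:ℂ) * Complex.I) := by
      push_cast; ring
    rw [h2, Complex.exp_int_mul_two_pi_mul_I]
    norm_num



lemma sum_range_id_choose : ∀ N : ℕ, ∑ k ∈ range N, k = N.choose 2
  | 0 => by simp
  | N + 1 => by
    rw [Finset.sum_range_succ, sum_range_id_choose N,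
      show (N+1).choose 2 = N.choose 1 + N.choose 2 from Nat.choose_succ_succ' N 1,
      Nat.choose_one_right]
    omega

lemma neg_one_pow_congr {a b : ℕ} (h : Even (a + b)) : ((-1 : ℂ)) ^ a = (-1) ^ b := by
  have h1 := Nat.even_add.1 h
  by_cases ha : Even a
  · rw [ha.neg_one_pow, (h1.1 ha).neg_one_pow]
  · rw [(Nat.not_even_iff_odd.1 ha).neg_one_pow,
      (Nat.not_even_iff_odd.1 fun hb => ha (h1.2 hb)).neg_one_pow]

lemma two_choose' (n : ℕ) : 2 * (n.choose 2 : ℤ) = n * (n - 1) := by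
  induction n with
  | zero => simp
  | succ n ih =>
    rw [Nat.choose_succ_succ, Nat.choose_one_right]
    push_cast
    push_cast at ih
    linarith

/-- merge the two finite weight products into a single product -/
lemma prod_merge {Q S z : ℂ} (hS : S ^ 2 = Q) (hS0 : S ≠ 0) (hz : z ≠ 0) (N : ℕ) :
    (∏ k ∈ range N, (1 - S * z * Q ^ k)) * (∏ k ∈ range N, (1 - S / z * Q ^ k))
      = (-S) ^ N * Q ^ N.choose 2 * (z⁻¹) ^ N
          * ∏ u ∈ range (2 * N), (1 - S * (Q⁻¹) ^ N * z * Q ^ u) := by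
  have hQ0 : Q ≠ 0 := hS ▸ pow_ne_zero 2 hS0
  have hw : z * z⁻¹ = 1 := mul_inv_cancel₀ hz
  have step1 : ∀ k : ℕ, 1 - S / z * Q ^ k
      = z⁻¹ * (-(S * Q ^ k)) * (1 - S * (Q⁻¹) ^ (k + 1) * z) := by
    intro k
    have e1 : Q ^ (k+1) * (Q⁻¹) ^ (k+1) = 1 := by
      rw [inv_pow]; exact mul_inv_cancel₀ (pow_ne_zero _ hQ0)
    rw [div_eq_mul_inv]
    linear_combination (-(S^2*Q^k*(Q⁻¹)^(k+1)))*hw + (-(Q^k*(Q⁻¹)^(k+1)))*hS + (-1)*e1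
  have hpow : ∀ j ∈ range N, (Q⁻¹) ^ N * Q ^ (N-1-j) = (Q⁻¹) ^ (j+1) := by
    intro j hj
    have hjN : j < N := mem_range.1 hj
    have h1 : (Q⁻¹) ^ N * Q ^ (N-1-j) * Q ^ (j+1) = (Q⁻¹) ^ (j+1) * Q ^ (j+1) := by
      rw [mul_assoc, ← pow_add, show N-1-j + (j+1) = N from by omega, inv_pow,
        inv_mul_cancel₀ (pow_ne_zero _ hQ0), inv_pow, inv_mul_cancel₀ (pow_ne_zero _ hQ0)]
    exact mul_right_cancel₀ (pow_ne_zero _ hQ0) h1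
  have step2 : ∏ k ∈ range N, (1 - S * (Q⁻¹) ^ (k + 1) * z)
      = ∏ u ∈ range N, (1 - S * (Q⁻¹) ^ N * z * Q ^ u) := by
    calc ∏ k ∈ range N, (1 - S * (Q⁻¹) ^ (k + 1) * z)
        = ∏ j ∈ range N, (1 - S * (Q⁻¹) ^ N * z * Q ^ (N-1-j)) := by
          refine Finset.prod_congr rfl fun j hj => ?_
          rw [← hpow j hj]; ring
    _ = ∏ u ∈ range N, (1 - S * (Q⁻¹) ^ N * z * Q ^ u) :=
          Finset.prod_range_reflect (fun u => 1 - S * (Q⁻¹) ^ N * z * Q ^ u) N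
  have step3 : ∏ u ∈ range (2*N), (1 - S * (Q⁻¹) ^ N * z * Q ^ u)
      = (∏ u ∈ range N, (1 - S * (Q⁻¹) ^ N * z * Q ^ u)) * ∏ u ∈ range N, (1 - S * z * Q ^ u) := by
    rw [two_mul, Finset.prod_range_add]
    congr 1
    refine Finset.prod_congr rfl fun u _ => ?_
    rw [pow_add, show S * (Q⁻¹) ^ N * z * (Q ^ N * Q ^ u) = S * z * Q ^ u * ((Q⁻¹)^N * Q^N) from
      by ring, inv_pow, inv_mul_cancel₀ (pow_ne_zero _ hQ0), mul_one]
  have hmid : ∏ k ∈ range N, -(S * Q ^ k) = (-S) ^ N * Q ^ N.choose 2 := by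
    calc ∏ k ∈ range N, -(S * Q ^ k) = ∏ k ∈ range N, (-S) * Q ^ k :=
          Finset.prod_congr rfl fun k _ => by ring
    _ = ((-S) ^ N) * ∏ k ∈ range N, Q ^ k := by
          rw [Finset.prod_mul_distrib, Finset.prod_const, Finset.card_range]
    _ = (-S) ^ N * Q ^ N.choose 2 := by rw [Finset.prod_pow_eq_pow_sum, sum_range_id_choose]
  have step4 : ∏ k ∈ range N, (1 - S / z * Q ^ k)
      = (z⁻¹) ^ N * ((-S) ^ N * Q ^ N.choose 2)
          * ∏ u ∈ range N, (1 - S * (Q⁻¹) ^ N * z * Q ^ u) := by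
    rw [Finset.prod_congr rfl fun k _ => step1 k, Finset.prod_mul_distrib,
      Finset.prod_mul_distrib, Finset.prod_const, Finset.card_range, hmid, step2]
  rw [step4, step3]
  ring

lemma pow_sub_zpow {S : ℂ} (hS0 : S ≠ 0) (a b : ℕ) :
    S ^ a * (S ^ b)⁻¹ = S ^ ((a : ℤ) - b) := by
  rw [sub_eq_add_neg, zpow_add₀ hS0, zpow_neg, zpow_natCast, zpow_natCast]

lemma keyExp {S : ℂ} (hS0 : S ≠ 0) (N k l : ℕ) (hl : l ≤ N + k) (hk : k ≤ N + l) :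
    (-S) ^ N * (S^2) ^ N.choose 2
        * ((-1) ^ (N + k - l) * (S^2) ^ ((N + k - l).choose 2) * (S * ((S^2)⁻¹) ^ N) ^ (N + k - l))
      = (-1) ^ (k + l) * S ^ (((l : ℤ) - k) ^ 2) := by
  set j := N + k - l with hjdef
  have hj : (j : ℤ) = (N : ℤ) + k - l := by rw [hjdef]; push_cast [hl]; omega
  have hsign : ((-1 : ℂ)) ^ (N + j) = (-1) ^ (k + l) :=
    neg_one_pow_congr ⟨N + k, by omega⟩
  have h1 : (-S)^N = (-1:ℂ)^N * S^N := by rw [neg_pow]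
  have h2 : ((S^2)) ^ (N.choose 2) = S^(2*N.choose 2) := by rw [pow_mul]
  have h3 : ((S^2)) ^ (j.choose 2) = S^(2*j.choose 2) := by rw [pow_mul]
  have h4 : (S * ((S^2)⁻¹) ^ N) ^ j = S^j * (S^(2*(N*j)))⁻¹ := by
    rw [mul_pow, inv_pow, inv_pow, ← pow_mul, ← pow_mul]
  calc (-S) ^ N * (S^2) ^ N.choose 2
        * ((-1) ^ j * (S^2) ^ (j.choose 2) * (S * ((S^2)⁻¹) ^ N) ^ j)
      = ((-1:ℂ)^(N+j)) * (S ^ N * S ^ (2 * N.choose 2) * S ^ (2 * j.choose 2) * S ^ j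
          * (S ^ (2 * (N * j)))⁻¹) := by
        rw [h1, h2, h3, h4, pow_add]
        ring
    _ = (-1) ^ (k + l) * (S ^ (N + 2 * N.choose 2 + 2 * j.choose 2 + j)
          * (S ^ (2 * (N * j)))⁻¹) := by
        rw [hsign, ← pow_add, ← pow_add, ← pow_add]
    _ = (-1) ^ (k + l) * S ^ (((N + 2 * N.choose 2 + 2 * j.choose 2 + j : ℕ) : ℤ) - (2*(N*j) : ℕ)) := by
        rw [pow_sub_zpow hS0]
    _ = (-1) ^ (k + l) * S ^ (((l : ℤ) - k) ^ 2) := by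
        congr 1
        congr 1
        push_cast
        have hc1 := two_choose' N
        have hc2 := two_choose' j
        linear_combination hc1 + hc2 + ((j:ℤ) - N + k - l) * hj

lemma termExp {S : ℂ} (hS0 : S ≠ 0) (k l : ℕ) :
    (S⁻¹)^(k+l) * (-1)^(k+l) * S^(((l : ℤ) - k)^2)
      = ((-1)^k * (S^2)^(k.choose 2)) * ((-1)^l * (S^2)^(l.choose 2) * (((S^2)⁻¹)^k)^l) := by
  have h2 : ((S^2)) ^ (k.choose 2) = S^(2*k.choose 2) := by rw [pow_mul]
  have h3 : ((S^2)) ^ (l.choose 2) = S^(2*l.choose 2) := by rw [pow_mul]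
  have h4 : (((S^2)⁻¹) ^ k) ^ l = (S^(2*(k*l)))⁻¹ := by
    rw [inv_pow, inv_pow, ← pow_mul, ← pow_mul]
  have h5 : (S⁻¹)^(k+l) = (S^(k+l))⁻¹ := by rw [inv_pow]
  rw [h2, h3, h4, h5]
  have hcast : S ^ ((k:ℤ) + (l:ℤ)) = S ^ (k + l) := by
    rw [← zpow_natCast S (k+l)]; norm_cast
  have hL : (S^(k+l))⁻¹ * S^(((l : ℤ) - k)^2) = S^((((l : ℤ) - k)^2) - ((k:ℤ) + (l:ℤ))) := by
    rw [zpow_sub₀ hS0, div_eq_mul_inv, hcast]; ring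
  have hR : S^(2*k.choose 2) * (S^(2*l.choose 2) * (S^(2*(k*l)))⁻¹)
      = S^(((2*k.choose 2 + 2*l.choose 2 : ℕ) : ℤ) - (2*(k*l) : ℕ)) := by
    rw [← mul_assoc, ← pow_add, pow_sub_zpow hS0]
  calc (S^(k+l))⁻¹ * (-1)^(k+l) * S^(((l : ℤ) - k)^2)
      = (-1:ℂ)^(k+l) * ((S^(k+l))⁻¹ * S^(((l : ℤ) - k)^2)) := by ring
    _ = (-1:ℂ)^(k+l) * S^((((l : ℤ) - k)^2) - ((k:ℤ) + (l:ℤ))) := by rw [hL]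
    _ = ((-1)^k * S^(2*k.choose 2)) * ((-1)^l * (S^(2*l.choose 2) * (S^(2*(k*l)))⁻¹)) := by
        rw [show ((-1:ℂ)^k * S^(2*k.choose 2)) * ((-1)^l * (S^(2*l.choose 2) * (S^(2*(k*l)))⁻¹))
            = (-1:ℂ)^(k+l) * (S^(2*k.choose 2) * (S^(2*l.choose 2) * (S^(2*(k*l)))⁻¹)) from by
          rw [pow_add]; ring]
        rw [hR]
        congr 2
        push_cast
        linear_combination (-1 : ℤ) * two_choose' k - two_choose' l
    _ = ((-1)^k * S^(2*k.choose 2)) * ((-1)^l * S^(2*l.choose 2) * (S^(2*(k*l)))⁻¹) := by ring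

lemma termExp2 {Q : ℂ} (hQ0 : Q ≠ 0) (n i : ℕ) :
    Q^((n+i).choose 2) * ((Q⁻¹)^(n*(n+i))) * Q^(n.choose 2) = Q^(i.choose 2) * (Q⁻¹)^n := by
  have hA : Q^((n+i).choose 2) * ((Q⁻¹)^(n*(n+i))) * Q^(n.choose 2)
      = Q^(((n+i).choose 2 + n.choose 2 : ℕ) : ℤ) * Q^(-(n*(n+i) : ℕ) : ℤ) := by
    rw [zpow_neg, zpow_natCast, zpow_natCast, inv_pow, pow_add]; ring
  have hB : Q^(i.choose 2) * (Q⁻¹)^n = Q^((i.choose 2 : ℕ) : ℤ) * Q^(-(n:ℕ) : ℤ) := by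
    rw [zpow_neg, zpow_natCast, zpow_natCast, inv_pow]
  rw [hA, hB, ← zpow_add₀ hQ0, ← zpow_add₀ hQ0]
  congr 1
  push_cast
  have h2 : (2:ℤ) * (((n+i).choose 2 : ℕ) : ℤ) = (n+i) * ((n+i) - 1) := by
    have := two_choose' (n+i); push_cast at this ⊢; linarith
  have h3 := two_choose' n
  have h4 := two_choose' i
  push_cast at h3 h4
  nlinarith [h2, h3, h4]



lemma prod_zero_of_lt {Q : ℂ} (hQ0 : Q ≠ 0) {k n : ℕ} (hk : k < n) :
    ∏ u ∈ range n, (1 - (Q⁻¹)^k * Q^u) = 0 := by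
  apply Finset.prod_eq_zero (Finset.mem_range.2 hk)
  rw [inv_pow, inv_mul_cancel₀ (pow_ne_zero _ hQ0), sub_self]

lemma ident {Q S : ℂ} (hS : S^2 = Q) (hQn : ‖Q‖ < 1) (hS0 : S ≠ 0) (m n : ℕ) :
    ∑ k ∈ range (m+1), ∑ l ∈ range (n+1),
        gbc Q m k * gbc Q n l * ((S⁻¹)^(k+l) * (-1)^(k+l) * S^(((l:ℤ)-k)^2))
      = if m = n then Q^(-(n:ℤ)) * qPoch Q Q n else 0 := by
  have hQ0 : Q ≠ 0 := hS ▸ pow_ne_zero 2 hS0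
  have hterm : ∀ k l : ℕ, (S⁻¹)^(k+l) * (-1:ℂ)^(k+l) * S^(((l:ℤ)-k)^2)
      = ((-1)^k * Q^(k.choose 2)) * ((-1)^l * Q^(l.choose 2) * ((Q⁻¹)^k)^l) := by
    intro k l
    rw [← hS]
    exact termExp hS0 k l
  have hinner : ∀ k : ℕ, ∑ l ∈ range (n+1),
      gbc Q m k * gbc Q n l * ((S⁻¹)^(k+l) * (-1:ℂ)^(k+l) * S^(((l:ℤ)-k)^2))
      = (gbc Q m k * ((-1)^k * Q^(k.choose 2))) * ∏ u ∈ range n, (1 - (Q⁻¹)^k * Q^u) := by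
    intro k
    rw [qbinom_expand hQn n ((Q⁻¹)^k), Finset.mul_sum]
    refine Finset.sum_congr rfl fun l _ => ?_
    rw [hterm k l]
    ring
  rw [Finset.sum_congr rfl fun k _ => hinner k]
  by_cases hmn : n ≤ m
  · -- split the k-sum at n
    rw [show m + 1 = n + (m + 1 - n) from by omega, Finset.sum_range_add]
    have hz : ∑ k ∈ range n, (gbc Q m k * ((-1:ℂ)^k * Q^(k.choose 2)))
        * ∏ u ∈ range n, (1 - (Q⁻¹)^k * Q^u) = 0 := by
      apply Finset.sum_eq_zero
      intro k hk
      rw [prod_zero_of_lt hQ0 (Finset.mem_range.1 hk), mul_zero]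
    rw [hz, zero_add]
    have hprod : ∀ i : ℕ, ∏ u ∈ range n, (1 - (Q⁻¹)^(n+i) * Q^u)
        = ((-1)^n * ((Q⁻¹)^(n+i))^n * Q^(n.choose 2)) * (qPoch Q Q (n+i) / qPoch Q Q i) := by
      intro i
      have hfac : ∀ u ∈ range n, 1 - (Q⁻¹)^(n+i) * Q^u
          = (-((Q⁻¹)^(n+i) * Q^u)) * (1 - Q^(n+i-u)) := by
        intro u hu
        have hun : u < n := Finset.mem_range.1 hu
        have e1 : Q^u * Q^(n+i-u) = Q^(n+i) := by rw [← pow_add]; congr 1; omega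
        have e2 : (Q⁻¹)^(n+i) * Q^(n+i) = 1 := by
          rw [inv_pow]; exact inv_mul_cancel₀ (pow_ne_zero _ hQ0)
        linear_combination (-(Q⁻¹)^(n+i))*e1 - e2
      rw [Finset.prod_congr rfl hfac, Finset.prod_mul_distrib]
      have h1 : ∏ u ∈ range n, -((Q⁻¹)^(n+i) * Q^u)
          = (-1:ℂ)^n * ((Q⁻¹)^(n+i))^n * Q^(n.choose 2) := by
        calc ∏ u ∈ range n, -((Q⁻¹)^(n+i) * Q^u)
            = ∏ u ∈ range n, (-((Q⁻¹)^(n+i))) * Q^u :=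
              Finset.prod_congr rfl fun u _ => by ring
        _ = (-((Q⁻¹)^(n+i)))^n * ∏ u ∈ range n, Q^u := by
              rw [Finset.prod_mul_distrib, Finset.prod_const, Finset.card_range]
        _ = (-1:ℂ)^n * ((Q⁻¹)^(n+i))^n * Q^(n.choose 2) := by
              rw [Finset.prod_pow_eq_pow_sum, sum_range_id_choose, neg_pow]
      have h2 : ∏ u ∈ range n, (1 - Q^(n+i-u)) = qPoch Q Q (n+i) / qPoch Q Q i := by
        rw [eq_div_iff (qPochq_ne_zero hQn i), mul_comm]
        exact pochRatio i n
      rw [h1, h2]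
    have hterm2 : ∀ i ∈ range (m + 1 - n),
        (gbc Q m (n+i) * ((-1:ℂ)^(n+i) * Q^((n+i).choose 2)))
          * ∏ u ∈ range n, (1 - (Q⁻¹)^(n+i) * Q^u)
        = (qPoch Q Q m / qPoch Q Q (m-n) * (Q⁻¹)^n)
            * ((-1)^i * Q^(i.choose 2) * gbc Q (m-n) i * 1^i) := by
      intro i hi
      have hin : i ≤ m - n := by have := Finset.mem_range.1 hi; omega
      have hsign : ((-1:ℂ))^(n+i) * (-1)^n = (-1)^i := by
        rw [← pow_add]
        exact neg_one_pow_congr ⟨n + i, by omega⟩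
      have hpow : ((Q⁻¹)^(n+i))^n = (Q⁻¹)^(n*(n+i)) := by rw [← pow_mul, mul_comm]
      have hgbc1 : gbc Q m (n+i)
          = qPoch Q Q m / (qPoch Q Q (n+i) * qPoch Q Q (m-n-i)) := by
        rw [gbc, if_pos (by omega), show m - (n+i) = m-n-i from by omega]
      have hgbc2 : gbc Q (m-n) i = qPoch Q Q (m-n) / (qPoch Q Q i * qPoch Q Q (m-n-i)) := by
        rw [gbc, if_pos hin]
      have hQe := termExp2 hQ0 n i
      have hni := qPochq_ne_zero hQn (n+i)
      have hii := qPochq_ne_zero hQn i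
      have hmni := qPochq_ne_zero hQn (m-n-i)
      have hmn' := qPochq_ne_zero hQn (m-n)
      rw [hprod i, hgbc1, hgbc2, hpow, one_pow]
      trans (qPoch Q Q m / (qPoch Q Q i * qPoch Q Q (m-n-i))
        * ((((-1:ℂ)^(n+i)) * (-1)^n) * (Q^((n+i).choose 2) * (Q⁻¹)^(n*(n+i)) * Q^(n.choose 2))))
      · field_simp
      · rw [hsign, show Q^((n+i).choose 2) * (Q⁻¹)^(n*(n+i)) * Q^(n.choose 2)
            = Q^(i.choose 2) * (Q⁻¹)^n from hQe]
        field_simp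
    rw [Finset.sum_congr rfl hterm2, ← Finset.mul_sum,
      show m + 1 - n = (m-n) + 1 from by omega, ← qbinom_expand hQn (m-n) 1]
    by_cases hmeq : m = n
    · subst hmeq
      rw [if_pos rfl, show m - m = 0 from by omega]
      rw [Finset.range_zero, Finset.prod_empty, qPoch_zero, div_one, mul_one]
      rw [show Q^(-(m:ℤ)) = (Q⁻¹)^m from by
        rw [zpow_neg, zpow_natCast, inv_pow]]
      ring
    · rw [if_neg hmeq]
      have h0 : (0:ℕ) ∈ range (m - n) := Finset.mem_range.2 (by omega)
      rw [Finset.prod_eq_zero h0 (by norm_num), mul_zero]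
  · -- m < n : everything vanishes
    have hmn' : m < n := Nat.not_le.1 hmn
    rw [if_neg (by omega)]
    apply Finset.sum_eq_zero
    intro k hk
    have hkn : k < n := by have := Finset.mem_range.1 hk; omega
    rw [prod_zero_of_lt hQ0 hkn, mul_zero]


lemma zfact (t : ℤ) (θ : ℝ) :
    (Complex.exp (θ * Complex.I)) ^ t = Complex.exp ((t : ℂ) * θ * Complex.I) := by
  rw [← Complex.exp_int_mul]
  congr 1
  ring

lemma zdiff (θ : ℝ) (k l : ℕ) :
    ((Complex.exp (θ * Complex.I))⁻¹) ^ k * (Complex.exp (θ * Complex.I)) ^ l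
      = Complex.exp ((((l : ℤ) - (k : ℤ) : ℤ) : ℂ) * θ * Complex.I) := by
  rw [inv_pow, ← zpow_natCast (Complex.exp (θ * Complex.I)) k,
    ← zpow_natCast (Complex.exp (θ * Complex.I)) l, ← zpow_neg,
    ← zpow_add₀ (Complex.exp_ne_zero _), zfact]
  congr 2
  push_cast
  ring

lemma conj_qPoch {Q : ℂ} (hc : (starRingEnd ℂ) Q = Q) (n : ℕ) :
    (starRingEnd ℂ) (qPoch Q Q n) = qPoch Q Q n := by
  rw [qPoch, map_prod]
  refine Finset.prod_congr rfl fun k _ => ?_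
  rw [map_sub, map_one, map_mul, map_pow, hc]

lemma prod_norm_bound {q : ℝ} (hq : 0 < q) (hq1 : q < 1) {a : ℂ}
    (ha : ‖a‖ ≤ Real.sqrt q) (N : ℕ) :
    ‖∏ j ∈ range N, (1 - a * (q : ℂ) ^ j)‖ ≤ Real.exp (Real.sqrt q * (1 - q)⁻¹) := by
  have hs0 : (0:ℝ) ≤ Real.sqrt q := Real.sqrt_nonneg q
  have hqc : ‖(q:ℂ)‖ = q := by
    rw [Complex.norm_real, Real.norm_eq_abs, abs_of_pos hq]
  calc ‖∏ j ∈ range N, (1 - a * (q : ℂ) ^ j)‖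
      = ∏ j ∈ range N, ‖1 - a * (q : ℂ) ^ j‖ := norm_prod _ _
    _ ≤ ∏ j ∈ range N, Real.exp (Real.sqrt q * q ^ j) := by
        apply Finset.prod_le_prod (fun j _ => norm_nonneg _)
        intro j _
        calc ‖1 - a * (q:ℂ)^j‖ ≤ ‖(1:ℂ)‖ + ‖a * (q:ℂ)^j‖ := norm_sub_le _ _
          _ = 1 + ‖a‖ * q^j := by
              rw [norm_one, norm_mul, norm_pow, hqc]
          _ ≤ 1 + Real.sqrt q * q^j := by
              have : (0:ℝ) ≤ q ^ j := pow_nonneg hq.le j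
              gcongr
          _ ≤ Real.exp (Real.sqrt q * q^j) := by
              rw [add_comm]
              exact Real.add_one_le_exp _
    _ = Real.exp (∑ j ∈ range N, Real.sqrt q * q ^ j) := (Real.exp_sum _ _).symm
    _ ≤ Real.exp (Real.sqrt q * (1 - q)⁻¹) := by
        apply Real.exp_le_exp.2
        rw [← Finset.mul_sum]
        apply mul_le_mul_of_nonneg_left _ hs0
        calc ∑ j ∈ range N, q ^ j ≤ ∑' j : ℕ, q ^ j :=
              Summable.sum_le_tsum _ (fun j _ => pow_nonneg hq.le j)
                (summable_geometric_of_lt_one hq.le hq1)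
          _ = (1 - q)⁻¹ := tsum_geometric_of_lt_one hq.le hq1

lemma weight_moment {Q S : ℂ} (hSQ : S ^ 2 = Q) (hS0 : S ≠ 0) (hQn : ‖Q‖ < 1) (N k l : ℕ)
    (hk : k ≤ N + l) (hl : l ≤ N + k) :
    (∫ θ in (0:ℝ)..(2*Real.pi),
        Complex.exp ((((l : ℤ) - (k : ℤ) : ℤ) : ℂ) * θ * Complex.I) *
          ((∏ j ∈ range N, (1 - S * Complex.exp (θ * Complex.I) * Q ^ j)) *
           (∏ j ∈ range N, (1 - S / Complex.exp (θ * Complex.I) * Q ^ j))))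
      = ((2*Real.pi : ℝ) : ℂ) * ((-1)^(k+l) * S^(((l:ℤ)-k)^2)
          * gbc Q (2*N) (N+k-l)) := by
  have hkey : (-S)^N * Q^(N.choose 2)
      * ((-1)^(N+k-l) * Q^((N+k-l).choose 2) * (S * (Q⁻¹)^N)^(N+k-l))
      = (-1)^(k+l) * S^(((l:ℤ)-k)^2) := by
    rw [← hSQ]
    exact keyExp hS0 N k l hl hk
  -- pointwise expansion
  have hpt : ∀ θ : ℝ,
      Complex.exp ((((l : ℤ) - (k : ℤ) : ℤ) : ℂ) * θ * Complex.I) *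
          ((∏ j ∈ range N, (1 - S * Complex.exp (θ * Complex.I) * Q ^ j)) *
           (∏ j ∈ range N, (1 - S / Complex.exp (θ * Complex.I) * Q ^ j)))
        = ∑ j ∈ range (2*N+1),
            ((-S)^N * Q^(N.choose 2) * ((-1)^j * Q^(j.choose 2) * gbc Q (2*N) j
              * (S * (Q⁻¹)^N)^j))
            * Complex.exp ((((j : ℤ) + l - k - N : ℤ) : ℂ) * θ * Complex.I) := by
    intro θ
    set z : ℂ := Complex.exp (θ * Complex.I) with hzdef
    have hz0 : z ≠ 0 := Complex.exp_ne_zero _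
    rw [prod_merge hSQ hS0 hz0 N, qbinom_expand hQn (2*N) (S * (Q⁻¹)^N * z)]
    rw [Finset.mul_sum, Finset.mul_sum]
    refine Finset.sum_congr rfl fun j _ => ?_
    have hzz : Complex.exp ((((l : ℤ) - (k : ℤ) : ℤ) : ℂ) * θ * Complex.I) * ((z⁻¹)^N * z^j)
        = Complex.exp ((((j : ℤ) + l - k - N : ℤ) : ℂ) * θ * Complex.I) := by
      rw [hzdef, ← zfact ((l : ℤ) - (k : ℤ)) θ, inv_pow, ← zpow_natCast (Complex.exp (θ * Complex.I)) N,
        ← zpow_natCast (Complex.exp (θ * Complex.I)) j, ← zpow_neg,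
        ← zpow_add₀ (Complex.exp_ne_zero _), ← zpow_add₀ (Complex.exp_ne_zero _), zfact]
      congr 2
      push_cast
      ring
    calc Complex.exp ((((l : ℤ) - (k : ℤ) : ℤ) : ℂ) * θ * Complex.I) *
          ((-S)^N * Q^(N.choose 2) * (z⁻¹)^N
            * ((-1)^j * Q^(j.choose 2) * gbc Q (2*N) j * (S * (Q⁻¹)^N * z)^j))
        = ((-S)^N * Q^(N.choose 2) * ((-1)^j * Q^(j.choose 2) * gbc Q (2*N) j
            * (S * (Q⁻¹)^N)^j))
          * (Complex.exp ((((l : ℤ) - (k : ℤ) : ℤ) : ℂ) * θ * Complex.I) * ((z⁻¹)^N * z^j)) := by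
          rw [mul_pow (S * (Q⁻¹)^N) z j]
          ring
      _ = _ := by rw [hzz]
  rw [intervalIntegral.integral_congr (g := fun θ => ∑ j ∈ range (2*N+1),
        ((-S)^N * Q^(N.choose 2) * ((-1)^j * Q^(j.choose 2) * gbc Q (2*N) j
          * (S * (Q⁻¹)^N)^j))
        * Complex.exp ((((j : ℤ) + l - k - N : ℤ) : ℂ) * θ * Complex.I)) (fun θ _ => hpt θ)]
  have hcont : ∀ t : ℤ, Continuous (fun θ : ℝ => Complex.exp ((t : ℂ) * θ * Complex.I)) := by
    intro t
    exact ((continuous_const.mul Complex.continuous_ofReal).mul continuous_const).cexp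
  rw [intervalIntegral.integral_finset_sum (f := fun j θ => ((-S)^N * Q^(N.choose 2) * ((-1)^j * Q^(j.choose 2) * gbc Q (2*N) j
        * (S * (Q⁻¹)^N)^j)) * Complex.exp ((((j : ℤ) + l - k - N : ℤ) : ℂ) * θ * Complex.I)) (fun j _ =>
    ((continuous_const.mul (hcont _)).intervalIntegrable _ _))]
  have hper : ∀ j ∈ range (2*N+1),
      (∫ θ in (0:ℝ)..(2*Real.pi),
        ((-S)^N * Q^(N.choose 2) * ((-1)^j * Q^(j.choose 2) * gbc Q (2*N) j
          * (S * (Q⁻¹)^N)^j))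
        * Complex.exp ((((j : ℤ) + l - k - N : ℤ) : ℂ) * θ * Complex.I))
      = ((-S)^N * Q^(N.choose 2) * ((-1)^j * Q^(j.choose 2) * gbc Q (2*N) j
          * (S * (Q⁻¹)^N)^j))
        * (if ((j : ℤ) + l - k - N : ℤ) = 0 then ((2*Real.pi : ℝ) : ℂ) else 0) := by
    intro j _
    rw [intervalIntegral.integral_const_mul, integral_exp_int]
  rw [Finset.sum_congr rfl hper]
  rw [Finset.sum_eq_single_of_mem (N + k - l) (Finset.mem_range.2 (by omega))
    (fun j _ hj => by rw [if_neg (by omega), mul_zero])]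
  rw [if_pos (by omega)]
  linear_combination (((2*Real.pi : ℝ) : ℂ) * gbc Q (2*N) (N+k-l)) * hkey

end SzegoAux

open Finset MeasureTheory intervalIntegral Complex Filter Topology SzegoAux

set_option maxHeartbeats 2000000 in
theorem stmt10 (q : ℝ) (hq : 0 < q) (hq1 : q < 1) (m n : ℕ) :
    (1 / (2 * Real.pi) : ℂ) * ∫ θ in (0:ℝ)..(2 * Real.pi),
        (starRingEnd ℂ) (szH (q : ℂ) (Real.sqrt q : ℂ) m (Complex.exp (θ * Complex.I))) *
          szH (q : ℂ) (Real.sqrt q : ℂ) n (Complex.exp (θ * Complex.I)) *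
          wc (q : ℂ) (Real.sqrt q : ℂ) (Complex.exp (θ * Complex.I))
      = if m = n then (q : ℂ) ^ (-(n : ℤ)) * qPoch (q : ℂ) (q : ℂ) n / qPochInf (q : ℂ) (q : ℂ)
        else 0 := by
  set S : ℂ := (Real.sqrt q : ℂ) with hSdef
  set Q : ℂ := (q : ℂ) with hQdef
  have hSQ : S ^ 2 = Q := by rw [hSdef, hQdef]; norm_cast; exact Real.sq_sqrt hq.le
  have hS0 : S ≠ 0 := by rw [hSdef]; simpa using (Real.sqrt_pos.2 hq).ne'
  have hQn : ‖Q‖ < 1 := by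
    rw [hQdef, Complex.norm_real, Real.norm_eq_abs, abs_of_pos hq]; exact hq1
  have hQ0 : Q ≠ 0 := hSQ ▸ pow_ne_zero 2 hS0
  have hs0 : 0 < Real.sqrt q := Real.sqrt_pos.2 hq
  have hs1 : Real.sqrt q < 1 := by
    rw [show (1:ℝ) = Real.sqrt 1 from (Real.sqrt_one).symm]
    exact Real.sqrt_lt_sqrt hq.le hq1
  have hsnorm : ‖S‖ = Real.sqrt q := by
    rw [hSdef, Complex.norm_real, Real.norm_eq_abs, abs_of_pos hs0]
  have hQc : (starRingEnd ℂ) Q = Q := by rw [hQdef]; exact Complex.conj_ofReal _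
  have hSc : (starRingEnd ℂ) S = S := by rw [hSdef]; exact Complex.conj_ofReal _
  have hz0 : ∀ θ : ℝ, Complex.exp (θ * Complex.I) ≠ 0 := fun θ => Complex.exp_ne_zero _
  have hznorm : ∀ θ : ℝ, ‖Complex.exp ((θ:ℂ) * Complex.I)‖ = 1 := by
    intro θ
    rw [Complex.norm_exp]
    simp
  have hconjz : ∀ θ : ℝ, (starRingEnd ℂ) (Complex.exp (θ * Complex.I))
      = (Complex.exp (θ * Complex.I))⁻¹ := by
    intro θ
    rw [← Complex.exp_conj, ← Complex.exp_neg]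
    congr 1
    rw [map_mul, Complex.conj_ofReal, Complex.conj_I]
    ring
  have hA : ∀ θ : ℝ, (starRingEnd ℂ) (szH Q S m (Complex.exp (θ * Complex.I)))
      = ∑ k ∈ range (m+1), gbc Q m k
          * (((Complex.exp (θ * Complex.I))⁻¹) ^ k * (S⁻¹) ^ k) := by
    intro θ
    rw [szH, map_sum]
    refine Finset.sum_congr rfl fun k hk => ?_
    have hkm : k ≤ m := Nat.lt_succ_iff.1 (Finset.mem_range.1 hk)
    rw [map_mul, map_div₀, conj_qPoch hQc, map_mul, conj_qPoch hQc, conj_qPoch hQc,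
      map_pow, map_div₀, hconjz, hSc]
    rw [show qPoch Q Q m / (qPoch Q Q k * qPoch Q Q (m-k)) = gbc Q m k from
      (by rw [gbc, if_pos hkm])]
    rw [div_eq_mul_inv, mul_pow]
  have hB : ∀ θ : ℝ, szH Q S n (Complex.exp (θ * Complex.I))
      = ∑ l ∈ range (n+1), gbc Q n l
          * ((Complex.exp (θ * Complex.I)) ^ l * (S⁻¹) ^ l) := by
    intro θ
    rw [szH]
    refine Finset.sum_congr rfl fun l hl => ?_
    have hln : l ≤ n := Nat.lt_succ_iff.1 (Finset.mem_range.1 hl)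
    rw [show qPoch Q Q n / (qPoch Q Q l * qPoch Q Q (n-l)) = gbc Q n l from
      (by rw [gbc, if_pos hln])]
    rw [div_eq_mul_inv, mul_pow]
  have hcont_z : Continuous fun θ : ℝ => Complex.exp ((θ:ℂ) * Complex.I) :=
    (Complex.continuous_ofReal.mul continuous_const).cexp
  have hcont_szH : ∀ j : ℕ, Continuous fun θ : ℝ => szH Q S j (Complex.exp (θ * Complex.I)) := by
    intro j
    apply continuous_finset_sum
    intro k _
    exact continuous_const.mul ((hcont_z.div_const S).pow k)
  have hcont_W : ∀ N : ℕ, Continuous fun θ : ℝ =>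
      (∏ j ∈ range N, (1 - S * Complex.exp (θ * Complex.I) * Q ^ j)) *
      (∏ j ∈ range N, (1 - S / Complex.exp (θ * Complex.I) * Q ^ j)) := by
    intro N
    apply Continuous.mul
    · apply continuous_finset_prod
      intro j _
      exact continuous_const.sub ((continuous_const.mul hcont_z).mul continuous_const)
    · apply continuous_finset_prod
      intro j _
      exact continuous_const.sub ((continuous_const.div hcont_z hz0).mul continuous_const)
  have hcont_e : ∀ t : ℤ, Continuous (fun θ : ℝ => Complex.exp ((t : ℂ) * θ * Complex.I)) := by
    intro t
    exact ((continuous_const.mul Complex.continuous_ofReal).mul continuous_const).cexp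
  set Cm : ℝ := ∑ k ∈ range (m+1), ‖gbc Q m k‖ * ((Real.sqrt q)⁻¹) ^ k with hCmdef
  set Cn : ℝ := ∑ l ∈ range (n+1), ‖gbc Q n l‖ * ((Real.sqrt q)⁻¹) ^ l with hCndef
  have hnorm_term : ∀ (θ : ℝ) (c : ℂ) (j : ℕ) (w : ℂ), (w = (Complex.exp (θ * Complex.I))⁻¹ ∨
      w = Complex.exp (θ * Complex.I)) → ‖c * (w ^ j * (S⁻¹) ^ j)‖
        = ‖c‖ * ((Real.sqrt q)⁻¹) ^ j := by
    intro θ c j w hw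
    have hwn : ‖w‖ = 1 := by
      rcases hw with h | h <;> rw [h]
      · rw [norm_inv, hznorm θ, inv_one]
      · exact hznorm θ
    rw [norm_mul, norm_mul, norm_pow, norm_pow, hwn, norm_inv, hsnorm, one_pow, one_mul]
  have hAbound : ∀ θ : ℝ, ‖(starRingEnd ℂ) (szH Q S m (Complex.exp (θ * Complex.I)))‖ ≤ Cm := by
    intro θ
    rw [hA θ, hCmdef]
    refine (norm_sum_le _ _).trans (le_of_eq (Finset.sum_congr rfl fun k _ => ?_))
    exact hnorm_term θ (gbc Q m k) k _ (Or.inl rfl)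
  have hBbound : ∀ θ : ℝ, ‖szH Q S n (Complex.exp (θ * Complex.I))‖ ≤ Cn := by
    intro θ
    rw [hB θ, hCndef]
    refine (norm_sum_le _ _).trans (le_of_eq (Finset.sum_congr rfl fun l _ => ?_))
    exact hnorm_term θ (gbc Q n l) l _ (Or.inr rfl)
  have hCm0 : 0 ≤ Cm := Finset.sum_nonneg fun k _ => by positivity
  have hCn0 : 0 ≤ Cn := Finset.sum_nonneg fun l _ => by positivity
  have hWbound : ∀ (N : ℕ) (θ : ℝ),
      ‖(∏ j ∈ range N, (1 - S * Complex.exp (θ * Complex.I) * Q ^ j)) *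
       (∏ j ∈ range N, (1 - S / Complex.exp (θ * Complex.I) * Q ^ j))‖
        ≤ (Real.exp (Real.sqrt q * (1-q)⁻¹)) ^ 2 := by
    intro N θ
    rw [norm_mul, sq]
    apply mul_le_mul _ _ (norm_nonneg _) (Real.exp_pos _).le
    · refine prod_norm_bound hq hq1 ?_ N
      rw [norm_mul, hsnorm, hznorm θ, mul_one]
    · refine prod_norm_bound hq hq1 ?_ N
      rw [norm_div, hsnorm, hznorm θ, div_one]
  have hDCT : Tendsto (fun N => ∫ θ in (0:ℝ)..(2*Real.pi),
      (starRingEnd ℂ) (szH Q S m (Complex.exp (θ * Complex.I))) *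
        szH Q S n (Complex.exp (θ * Complex.I)) *
        ((∏ j ∈ range N, (1 - S * Complex.exp (θ * Complex.I) * Q ^ j)) *
         (∏ j ∈ range N, (1 - S / Complex.exp (θ * Complex.I) * Q ^ j)))) atTop
      (𝓝 (∫ θ in (0:ℝ)..(2*Real.pi),
        (starRingEnd ℂ) (szH Q S m (Complex.exp (θ * Complex.I))) *
          szH Q S n (Complex.exp (θ * Complex.I)) *
          wc Q S (Complex.exp (θ * Complex.I)))) := by
    apply intervalIntegral.tendsto_integral_filter_of_dominated_convergence
      (bound := fun _ => Cm * Cn * (Real.exp (Real.sqrt q * (1-q)⁻¹)) ^ 2)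
    · apply Filter.Eventually.of_forall
      intro N
      exact (((Complex.continuous_conj.comp (hcont_szH m)).mul (hcont_szH n)).mul
        (hcont_W N)).aestronglyMeasurable
    · apply Filter.Eventually.of_forall
      intro N
      apply MeasureTheory.ae_of_all
      intro θ _
      rw [norm_mul, norm_mul]
      apply mul_le_mul _ (hWbound N θ) (norm_nonneg _) (mul_nonneg hCm0 hCn0)
      exact mul_le_mul (hAbound θ) (hBbound θ) (norm_nonneg _) hCm0
    · exact intervalIntegrable_const
    · apply MeasureTheory.ae_of_all
      intro θ _
      have hnormSz : ‖S * Complex.exp (θ * Complex.I)‖ < 1 := by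
        rw [norm_mul, hsnorm, hznorm θ, mul_one]; exact hs1
      have hnormSz' : ‖S / Complex.exp (θ * Complex.I)‖ < 1 := by
        rw [norm_div, hsnorm, hznorm θ, div_one]; exact hs1
      have t1 := tendsto_prod_qPochInf hQn hnormSz
      have t2 := tendsto_prod_qPochInf hQn hnormSz'
      have h3 := (t1.mul t2).const_mul
        ((starRingEnd ℂ) (szH Q S m (Complex.exp (θ * Complex.I))) *
          szH Q S n (Complex.exp (θ * Complex.I)))
      simpa only [wc, mul_assoc] using h3
  have hEx : ∀ᶠ N in atTop, (∫ θ in (0:ℝ)..(2*Real.pi),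
      (starRingEnd ℂ) (szH Q S m (Complex.exp (θ * Complex.I))) *
        szH Q S n (Complex.exp (θ * Complex.I)) *
        ((∏ j ∈ range N, (1 - S * Complex.exp (θ * Complex.I) * Q ^ j)) *
         (∏ j ∈ range N, (1 - S / Complex.exp (θ * Complex.I) * Q ^ j))))
      = ((2*Real.pi : ℝ) : ℂ) * ∑ k ∈ range (m+1), ∑ l ∈ range (n+1),
          (gbc Q m k * gbc Q n l * ((S⁻¹)^(k+l) * (-1)^(k+l) * S^(((l:ℤ)-k)^2)))
            * gbc Q (2*N) (N+k-l) := by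
    filter_upwards [eventually_ge_atTop (m+n)] with N hN
    have hFpt : ∀ θ : ℝ,
        (starRingEnd ℂ) (szH Q S m (Complex.exp (θ * Complex.I))) *
          szH Q S n (Complex.exp (θ * Complex.I)) *
          ((∏ j ∈ range N, (1 - S * Complex.exp (θ * Complex.I) * Q ^ j)) *
           (∏ j ∈ range N, (1 - S / Complex.exp (θ * Complex.I) * Q ^ j)))
        = ∑ k ∈ range (m+1), ∑ l ∈ range (n+1),
            (gbc Q m k * gbc Q n l * (S⁻¹)^(k+l)) *
              (Complex.exp ((((l:ℤ)-(k:ℤ) : ℤ):ℂ) * θ * Complex.I) *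
                ((∏ j ∈ range N, (1 - S * Complex.exp (θ * Complex.I) * Q ^ j)) *
                 (∏ j ∈ range N, (1 - S / Complex.exp (θ * Complex.I) * Q ^ j)))) := by
      intro θ
      rw [hA θ, hB θ, Finset.sum_mul_sum, Finset.sum_mul]
      refine Finset.sum_congr rfl fun k _ => ?_
      rw [Finset.sum_mul]
      refine Finset.sum_congr rfl fun l _ => ?_
      rw [pow_add (S⁻¹) k l, ← zdiff θ k l]
      ring
    rw [intervalIntegral.integral_congr (fun θ _ => hFpt θ)]
    rw [intervalIntegral.integral_finset_sum (f := fun k θ => ∑ l ∈ range (n+1),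
        gbc Q m k * gbc Q n l * (S⁻¹)^(k+l) * (Complex.exp ((((l:ℤ)-(k:ℤ) : ℤ):ℂ) * θ * Complex.I) * ((∏ j ∈ range N, (1 - S * Complex.exp (θ * Complex.I) * Q ^ j)) * (∏ j ∈ range N, (1 - S / Complex.exp (θ * Complex.I) * Q ^ j))))) (fun k _ =>
      ((continuous_finset_sum _ fun l _ => continuous_const.mul
        ((hcont_e _).mul (hcont_W N))).intervalIntegrable _ _))]
    rw [Finset.sum_congr rfl (fun k _ => intervalIntegral.integral_finset_sum (f := fun l θ =>
        gbc Q m k * gbc Q n l * (S⁻¹)^(k+l) * (Complex.exp ((((l:ℤ)-(k:ℤ) : ℤ):ℂ) * θ * Complex.I) * ((∏ j ∈ range N, (1 - S * Complex.exp (θ * Complex.I) * Q ^ j)) * (∏ j ∈ range N, (1 - S / Complex.exp (θ * Complex.I) * Q ^ j))))) (fun l _ =>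
      ((continuous_const.mul ((hcont_e _).mul (hcont_W N))).intervalIntegrable _ _)))]
    rw [Finset.sum_congr rfl (fun k hk => Finset.sum_congr rfl (fun l hl => by
      rw [intervalIntegral.integral_const_mul,
        weight_moment hSQ hS0 hQn N k l
          (by have := Finset.mem_range.1 hk; omega)
          (by have := Finset.mem_range.1 hl; omega)]))]
    rw [Finset.mul_sum]
    refine Finset.sum_congr rfl fun k _ => ?_
    rw [Finset.mul_sum]
    refine Finset.sum_congr rfl fun l _ => ?_
    ring
  have hL0 : qPochInf Q Q ≠ 0 := qPochInf_ne_zero hQn hQn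
  have hgbclim : ∀ k l : ℕ, Tendsto (fun N => gbc Q (2*N) (N+k-l)) atTop
      (𝓝 ((qPochInf Q Q)⁻¹)) := by
    intro k l
    have h2N : Tendsto (fun N : ℕ => 2*N) atTop atTop :=
      Filter.tendsto_atTop.2 fun b => Filter.eventually_atTop.2 ⟨b, fun N hN => by omega⟩
    have hsub1 : Tendsto (fun N : ℕ => N+k-l) atTop atTop :=
      Filter.tendsto_atTop.2 fun b => Filter.eventually_atTop.2 ⟨b+l, fun N hN => by omega⟩
    have hsub2 : Tendsto (fun N : ℕ => N+l-k) atTop atTop :=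
      Filter.tendsto_atTop.2 fun b => Filter.eventually_atTop.2 ⟨b+k, fun N hN => by omega⟩
    have hmain : Tendsto (fun N : ℕ =>
        qPoch Q Q (2*N) / (qPoch Q Q (N+k-l) * qPoch Q Q (N+l-k))) atTop
        (𝓝 (qPochInf Q Q / (qPochInf Q Q * qPochInf Q Q))) :=
      Tendsto.div ((tendsto_qPoch hQn).comp h2N)
        (((tendsto_qPoch hQn).comp hsub1).mul ((tendsto_qPoch hQn).comp hsub2))
        (mul_ne_zero hL0 hL0)
    rw [show qPochInf Q Q / (qPochInf Q Q * qPochInf Q Q) = (qPochInf Q Q)⁻¹ from by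
      field_simp] at hmain
    apply Filter.Tendsto.congr' _ hmain
    filter_upwards [eventually_ge_atTop (k+l)] with N hN
    rw [gbc, if_pos (by omega), show 2*N - (N+k-l) = N+l-k from by omega]
  have hTTlim : Tendsto (fun N => ((2*Real.pi:ℝ):ℂ) *
      ∑ k ∈ range (m+1), ∑ l ∈ range (n+1),
        (gbc Q m k * gbc Q n l * ((S⁻¹)^(k+l) * (-1)^(k+l) * S^(((l:ℤ)-k)^2)))
          * gbc Q (2*N) (N+k-l)) atTop
      (𝓝 (((2*Real.pi:ℝ):ℂ) * ∑ k ∈ range (m+1), ∑ l ∈ range (n+1),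
        (gbc Q m k * gbc Q n l * ((S⁻¹)^(k+l) * (-1)^(k+l) * S^(((l:ℤ)-k)^2)))
          * (qPochInf Q Q)⁻¹)) := by
    apply Filter.Tendsto.const_mul
    apply tendsto_finset_sum
    intro k _
    apply tendsto_finset_sum
    intro l _
    exact (hgbclim k l).const_mul _
  have hmain2 : (∫ θ in (0:ℝ)..(2*Real.pi),
      (starRingEnd ℂ) (szH Q S m (Complex.exp (θ * Complex.I))) *
        szH Q S n (Complex.exp (θ * Complex.I)) *
        wc Q S (Complex.exp (θ * Complex.I)))
      = ((2*Real.pi:ℝ):ℂ) * ∑ k ∈ range (m+1), ∑ l ∈ range (n+1),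
        (gbc Q m k * gbc Q n l * ((S⁻¹)^(k+l) * (-1)^(k+l) * S^(((l:ℤ)-k)^2)))
          * (qPochInf Q Q)⁻¹ :=
    tendsto_nhds_unique hDCT (Filter.Tendsto.congr' (Filter.EventuallyEq.symm hEx) hTTlim)
  rw [hmain2]
  rw [Finset.sum_congr rfl (fun k (_ : k ∈ range (m+1)) =>
    (Finset.sum_mul (range (n+1)) _ ((qPochInf Q Q)⁻¹)).symm), ← Finset.sum_mul]
  rw [ident hSQ hQn hS0 m n]
  have hpi : ((2*Real.pi : ℝ):ℂ) ≠ 0 := by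
    rw [Complex.ofReal_ne_zero]
    positivity
  by_cases hmn : m = n
  · rw [if_pos hmn, if_pos hmn]
    rw [zpow_neg, zpow_natCast]
    rw [div_eq_mul_inv]
    push_cast
    field_simp
  · rw [if_neg hmn, if_neg hmn]
    simp
end

section
/- Let y_1, y_2 be functions analytic in an annulus containing q^2 ≤ |z| ≤ q^{-2} satisfying T_{q,z}(p(z) D_{q,z} y_j)(z) = λ_j ω(z) y_j(z) for j = 1,2 with λ_1 ≠ λ_2 and λ_1, λ_2 real, where ω(z) > 0 a.e. on |z| = 1. Then (1/(2πi)) ∮_{|z|=1} y_1(z) \overline{y_2(z)} ω(z) dz/z = 0. -/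
open Finset MeasureTheory intervalIntegral Complex

/-! ### Auxiliary definitions and lemmas -/

/-- the "Schwarz reflection" of a function: `conj ∘ f ∘ conj ∘ inv` -/
noncomputable def cconj (f : ℂ → ℂ) : ℂ → ℂ :=
  fun z => (starRingEnd ℂ) (f ((starRingEnd ℂ) (z⁻¹)))

lemma diff_conjconj {f : ℂ → ℂ} {z : ℂ}
    (hf : DifferentiableAt ℂ f ((starRingEnd ℂ) z)) :
    DifferentiableAt ℂ (fun w => (starRingEnd ℂ) (f ((starRingEnd ℂ) w))) z := by
  have h := hasDerivAt_iff_tendsto.mp hf.hasDerivAt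
  have hcont : Filter.Tendsto (starRingEnd ℂ) (nhds z) (nhds ((starRingEnd ℂ) z)) :=
    (continuous_conj).tendsto z
  have h2 := h.comp hcont
  have key : HasDerivAt (fun w => (starRingEnd ℂ) (f ((starRingEnd ℂ) w)))
      ((starRingEnd ℂ) (deriv f ((starRingEnd ℂ) z))) z := by
    rw [hasDerivAt_iff_tendsto]
    convert h2 using 1
    funext x
    simp only [Function.comp_apply]
    have e1 : ‖(starRingEnd ℂ) x - (starRingEnd ℂ) z‖ = ‖x - z‖ := by
      rw [← map_sub, RCLike.norm_conj]
    have e2 : (starRingEnd ℂ) (f ((starRingEnd ℂ) x)) - (starRingEnd ℂ) (f ((starRingEnd ℂ) z))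
        - (x - z) • (starRingEnd ℂ) (deriv f ((starRingEnd ℂ) z))
        = (starRingEnd ℂ) (f ((starRingEnd ℂ) x) - f ((starRingEnd ℂ) z)
            - ((starRingEnd ℂ) x - (starRingEnd ℂ) z) • deriv f ((starRingEnd ℂ) z)) := by
      simp only [map_sub, smul_eq_mul, map_mul, Complex.conj_conj]
    rw [e2, RCLike.norm_conj, e1]
  exact key.differentiableAt

lemma diff_cconj {f : ℂ → ℂ} {z : ℂ} (hz : z ≠ 0)
    (hf : DifferentiableAt ℂ f ((starRingEnd ℂ) (z⁻¹))) :
    DifferentiableAt ℂ (cconj f) z := by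
  have h1 : DifferentiableAt ℂ (fun w => (starRingEnd ℂ) (f ((starRingEnd ℂ) w))) z⁻¹ :=
    diff_conjconj hf
  have h2 : DifferentiableAt ℂ (fun w : ℂ => w⁻¹) z := differentiableAt_inv hz
  exact h1.comp z h2

lemma analyticAt_cconj {f : ℂ → ℂ} {z : ℂ} (hz : z ≠ 0)
    (hf : ∀ᶠ w in nhds ((starRingEnd ℂ) (z⁻¹)), DifferentiableAt ℂ f w) :
    AnalyticAt ℂ (cconj f) z := by
  rw [Complex.analyticAt_iff_eventually_differentiableAt]
  have hcont : Filter.Tendsto (fun w : ℂ => (starRingEnd ℂ) (w⁻¹)) (nhds z)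
      (nhds ((starRingEnd ℂ) (z⁻¹))) :=
    (continuous_conj.tendsto _).comp (tendsto_inv₀ hz)
  have h1 := hcont.eventually hf
  have h2 : ∀ᶠ w in nhds z, w ≠ 0 := eventually_ne_nhds hz
  filter_upwards [h1, h2] with w hw1 hw2
  exact diff_cconj hw2 hw1

lemma isPreconnected_annulus {a b : ℝ} (ha : 0 < a) :
    IsPreconnected {z : ℂ | a ≤ ‖z‖ ∧ ‖z‖ ≤ b} := by
  have : {z : ℂ | a ≤ ‖z‖ ∧ ‖z‖ ≤ b}
      = (fun p : ℝ × ℝ => (p.1 : ℂ) * Complex.exp (p.2 * Complex.I)) ''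
        (Set.Icc a b ×ˢ Set.univ) := by
    ext z
    constructor
    · rintro ⟨h1, h2⟩
      exact ⟨⟨‖z‖, Complex.arg z⟩, ⟨⟨h1, h2⟩, trivial⟩, Complex.norm_mul_exp_arg_mul_I z⟩
    · rintro ⟨⟨r, θ⟩, ⟨⟨hr1, hr2⟩, -⟩, rfl⟩
      have habs : ‖(r : ℂ) * Complex.exp (θ * Complex.I)‖ = r := by
        rw [norm_mul, Complex.norm_exp]
        simp [Complex.norm_real, _root_.abs_of_nonneg (ha.le.trans hr1)]
      exact ⟨by rw [habs]; exact hr1, by rw [habs]; exact hr2⟩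
  rw [this]
  apply IsPreconnected.image
  · exact (isPreconnected_Icc).prod isPreconnected_univ
  · apply Continuous.continuousOn
    continuity

lemma circle_param (ρ : ℝ) (hρ : ρ ≠ 0) (F : ℂ → ℂ) :
    (∮ z in C((0 : ℂ), ρ), (z - 0)⁻¹ • F z)
      = Complex.I * ∫ θ in (0:ℝ)..(2*Real.pi), F ((ρ : ℂ) * Complex.exp (θ * Complex.I)) := by
  rw [circleIntegral, ← intervalIntegral.integral_const_mul]
  refine intervalIntegral.integral_congr fun θ _ => ?_
  have hne : circleMap 0 ρ θ ≠ 0 := by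
    simp [circleMap_ne_center hρ, circleMap, hρ, Complex.exp_ne_zero]
  have : circleMap 0 ρ θ = (ρ : ℂ) * Complex.exp (θ * Complex.I) := by
    simp [circleMap]
  rw [deriv_circleMap, smul_eq_mul, smul_eq_mul, sub_zero, this] at *
  have hρc : (ρ:ℂ) ≠ 0 := Complex.ofReal_ne_zero.mpr hρ
  field_simp [Complex.exp_ne_zero]

lemma annulus_avg {r R : ℝ} (h0 : 0 < r) (hle : r ≤ R) (F : ℂ → ℂ)
    (hd : ∀ z : ℂ, r ≤ ‖z‖ → ‖z‖ ≤ R → DifferentiableAt ℂ F z) :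
    (∫ θ in (0:ℝ)..(2*Real.pi), F ((R : ℂ) * Complex.exp (θ * Complex.I)))
      = ∫ θ in (0:ℝ)..(2*Real.pi), F ((r : ℂ) * Complex.exp (θ * Complex.I)) := by
  have hc : ContinuousOn F (Metric.closedBall (0:ℂ) R \ Metric.ball (0:ℂ) r) := by
    intro z hz
    have h1 : ‖z‖ ≤ R := by
      have := hz.1; rwa [Metric.mem_closedBall, Complex.dist_eq, sub_zero] at this
    have h2 : r ≤ ‖z‖ := by
      have := hz.2; rw [Metric.mem_ball, Complex.dist_eq, sub_zero] at this
      linarith [not_lt.mp this]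
    exact ((hd z h2 h1).continuousAt).continuousWithinAt
  have hdd : ∀ z ∈ (Metric.ball (0:ℂ) R \ Metric.closedBall (0:ℂ) r) \ (∅ : Set ℂ),
      DifferentiableAt ℂ F z := by
    rintro z ⟨⟨hz1, hz2⟩, -⟩
    rw [Metric.mem_ball, Complex.dist_eq, sub_zero] at hz1
    rw [Metric.mem_closedBall, Complex.dist_eq, sub_zero] at hz2
    exact hd z (le_of_not_ge hz2) hz1.le
  have key := circleIntegral_sub_center_inv_smul_eq_of_differentiable_on_annulus_off_countable
    h0 hle Set.countable_empty hc hdd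
  rw [circle_param R (by linarith) F, circle_param r (by linarith) F] at key
  exact mul_left_cancel₀ Complex.I_ne_zero key

noncomputable def A1fun (q : ℂ) (p y : ℂ → ℂ) : ℂ → ℂ := fun z =>
  (p z * (y z - y (q*z)) - p (q*z) * (y (q*z) - y (q*(q*z)))) / (1-q)^2

noncomputable def F1f (q : ℂ) (p y Y : ℂ → ℂ) : ℂ → ℂ := fun z =>
  p z * y z * Y (q⁻¹*z) / (1-q)^2
noncomputable def F2f (q : ℂ) (p y Y : ℂ → ℂ) : ℂ → ℂ := fun z =>
  p (q⁻¹*z) * y z * Y (q⁻¹*z) / (1-q)^2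
noncomputable def F3f (q : ℂ) (p y Y : ℂ → ℂ) : ℂ → ℂ := fun z =>
  -(p (q⁻¹*z) * y z * Y (q⁻¹*(q⁻¹*z)) / (1-q)^2)
noncomputable def Ff (q : ℂ) (p y Y : ℂ → ℂ) : ℂ → ℂ := fun z =>
  F1f q p y Y z + F2f q p y Y z + F3f q p y Y z

noncomputable def Gf (q : ℂ) (p y Y P : ℂ → ℂ) : ℂ → ℂ := fun z =>
  A1fun q p y z * Y z
    - y z * ((P z * (Y z - Y (q⁻¹*z)) - P (q⁻¹*z) * (Y (q⁻¹*z) - Y (q⁻¹*(q⁻¹*z)))) / (1-q)^2)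

lemma A1_eq_Tq (q : ℂ) (hq0 : q ≠ 0) (hq1 : (1:ℂ) - q ≠ 0) (p y : ℂ → ℂ) (z : ℂ) (hz : z ≠ 0) :
    Tq q (fun w => p w * Dq q y w) z = A1fun q p y z := by
  have d1 : (1-q)*z ≠ 0 := mul_ne_zero hq1 hz
  have d2 : (1-q)*(q*z) ≠ 0 := mul_ne_zero hq1 (mul_ne_zero hq0 hz)
  simp only [Tq, Dq, A1fun]
  rw [div_eq_div_iff hq1 (pow_ne_zero 2 hq1)]
  simp only [← mul_div_assoc]
  rw [div_sub_div _ _ d1 d2, ← mul_div_assoc, div_mul_eq_mul_div,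
    div_eq_iff (mul_ne_zero d1 d2)]
  ring

lemma telescope (q : ℂ) (hq0 : q ≠ 0) (p y Y : ℂ → ℂ) (z : ℂ) :
    Gf q p y Y p z
      = Ff q p y Y z - Ff q p y Y (q*z) + F3f q p y Y (q*z) - F3f q p y Y (q*(q*z)) := by
  simp only [Gf, Ff, F1f, F2f, F3f, A1fun]
  have e1 : q⁻¹ * (q * z) = z := by field_simp
  have e2 : q⁻¹ * (q * (q * z)) = q * z := by field_simp
  rw [e1, e2, e1]
  ring

lemma conj_inv_circle {z : ℂ} (hz : ‖z‖ = 1) :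
    (starRingEnd ℂ) (z⁻¹) = z := by
  have h1 : z * (starRingEnd ℂ) z = 1 := by
    rw [Complex.mul_conj, Complex.normSq_eq_norm_sq, hz]; norm_num
  have h2 : (starRingEnd ℂ) z = z⁻¹ := eq_inv_of_mul_eq_one_right h1
  rw [map_inv₀, h2, inv_inv]

lemma cconj_circle0 (f : ℂ → ℂ) {z : ℂ} (hz : ‖z‖ = 1) :
    cconj f z = (starRingEnd ℂ) (f z) := by
  rw [cconj, conj_inv_circle hz]

lemma cconj_circle1 (f : ℂ → ℂ) (c : ℝ) {z : ℂ} (hz : ‖z‖ = 1) :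
    cconj f ((c:ℂ)⁻¹ * z) = (starRingEnd ℂ) (f ((c:ℂ) * z)) := by
  rw [cconj, mul_inv, inv_inv, map_mul, Complex.conj_ofReal, conj_inv_circle hz]

lemma cconj_circle2 (f : ℂ → ℂ) (c d : ℝ) {z : ℂ} (hz : ‖z‖ = 1) :
    cconj f ((c:ℂ)⁻¹ * ((d:ℂ)⁻¹ * z)) = (starRingEnd ℂ) (f ((c:ℂ) * ((d:ℂ) * z))) := by
  rw [cconj, mul_inv, inv_inv, mul_inv, inv_inv, map_mul, map_mul, Complex.conj_ofReal,
    Complex.conj_ofReal, conj_inv_circle hz]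

lemma conj_A1 (q : ℝ) (p y : ℂ → ℂ) {z : ℂ} (hz : ‖z‖ = 1) :
    (starRingEnd ℂ) (A1fun (q:ℂ) p y z)
      = (cconj p z * (cconj y z - cconj y ((q:ℂ)⁻¹*z))
          - cconj p ((q:ℂ)⁻¹*z) * (cconj y ((q:ℂ)⁻¹*z) - cconj y ((q:ℂ)⁻¹*((q:ℂ)⁻¹*z))))
        / (1-(q:ℂ))^2 := by
  rw [cconj_circle0 p hz, cconj_circle0 y hz, cconj_circle1 p q hz, cconj_circle1 y q hz,
    cconj_circle2 y q q hz]
  simp only [A1fun, map_div₀, map_sub, map_mul, map_pow, map_one, Complex.conj_ofReal]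

set_option maxHeartbeats 2000000 in
theorem stmt12 (q : ℝ) (hq : 0 < q) (hq1 : q < 1) (p ω y1 y2 : ℂ → ℂ) (l1 l2 : ℝ)
    (hy1 : AnalyticOnNhd ℂ y1 {z : ℂ | q ^ 2 ≤ ‖z‖ ∧ ‖z‖ ≤ (q ^ 2)⁻¹})
    (hy2 : AnalyticOnNhd ℂ y2 {z : ℂ | q ^ 2 ≤ ‖z‖ ∧ ‖z‖ ≤ (q ^ 2)⁻¹})
    (hp : AnalyticOnNhd ℂ p {z : ℂ | q ≤ ‖z‖ ∧ ‖z‖ ≤ q⁻¹})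
    (hppos : ∀ᵐ θ : ℝ ∂(volume.restrict (Set.Ioc (0:ℝ) (2 * Real.pi))),
      0 < (p (Complex.exp (θ * Complex.I))).re ∧ (p (Complex.exp (θ * Complex.I))).im = 0)
    (hωpos : ∀ᵐ θ : ℝ ∂(volume.restrict (Set.Ioc (0:ℝ) (2 * Real.pi))),
      0 < (ω (Complex.exp (θ * Complex.I))).re ∧ (ω (Complex.exp (θ * Complex.I))).im = 0)
    (hωint : IntervalIntegrable (fun θ : ℝ => ω (Complex.exp (θ * Complex.I)))
      volume 0 (2 * Real.pi))
    (heq1 : ∀ z : ℂ, q ≤ ‖z‖ → ‖z‖ ≤ q⁻¹ →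
      Tq (q : ℂ) (fun w => p w * Dq (q : ℂ) y1 w) z = (l1 : ℂ) * ω z * y1 z)
    (heq2 : ∀ z : ℂ, q ≤ ‖z‖ → ‖z‖ ≤ q⁻¹ →
      Tq (q : ℂ) (fun w => p w * Dq (q : ℂ) y2 w) z = (l2 : ℂ) * ω z * y2 z)
    (hne : l1 ≠ l2) :
    (1 / (2 * Real.pi) : ℂ) * ∫ θ in (0:ℝ)..(2 * Real.pi),
        y1 (Complex.exp (θ * Complex.I)) *
          (starRingEnd ℂ) (y2 (Complex.exp (θ * Complex.I))) *
          ω (Complex.exp (θ * Complex.I)) = 0 := by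
  -- numeric preliminaries
  have hq0c : (q:ℂ) ≠ 0 := Complex.ofReal_ne_zero.mpr hq.ne'
  have hq1c : (1:ℂ) - (q:ℂ) ≠ 0 := by
    rw [sub_ne_zero]
    intro h
    have : (q:ℝ) = 1 := by exact_mod_cast h.symm
    linarith
  have hq2pos : 0 < q^2 := by positivity
  have hqle1 : q ≤ 1 := hq1.le
  have hq2leq : q^2 ≤ q := by nlinarith
  have hqipos : 0 < q⁻¹ := inv_pos.mpr hq
  have h1leqi : (1:ℝ) ≤ q⁻¹ := (one_le_inv₀ hq).mpr hqle1
  have hq2i : (q^2)⁻¹ = q⁻¹ * q⁻¹ := by rw [sq, mul_inv]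
  have hqiv : q⁻¹ ≤ (q^2)⁻¹ := by rw [hq2i]; nlinarith
  have h1leq2i : (1:ℝ) ≤ (q^2)⁻¹ := h1leqi.trans hqiv
  have hqleqi : q ≤ q⁻¹ := hqle1.trans h1leqi
  have hqinv : q * q⁻¹ = 1 := mul_inv_cancel₀ hq.ne'
  -- differentiability packages
  have hdy1 : ∀ z : ℂ, q^2 ≤ ‖z‖ → ‖z‖ ≤ (q^2)⁻¹ →
      DifferentiableAt ℂ y1 z := fun z h1 h2 => (hy1 z ⟨h1, h2⟩).differentiableAt
  have hdy2 : ∀ z : ℂ, q^2 ≤ ‖z‖ → ‖z‖ ≤ (q^2)⁻¹ →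
      DifferentiableAt ℂ y2 z := fun z h1 h2 => (hy2 z ⟨h1, h2⟩).differentiableAt
  have hdp : ∀ z : ℂ, q ≤ ‖z‖ → ‖z‖ ≤ q⁻¹ →
      DifferentiableAt ℂ p z := fun z h1 h2 => (hp z ⟨h1, h2⟩).differentiableAt
  have habsinv : ∀ z : ℂ, ‖(starRingEnd ℂ) (z⁻¹)‖ = (‖z‖)⁻¹ := by
    intro z; rw [RCLike.norm_conj, norm_inv]
  have habsmul : ∀ z : ℂ, ‖(q:ℂ)⁻¹ * z‖ = q⁻¹ * ‖z‖ := by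
    intro z; rw [norm_mul, norm_inv, Complex.norm_real, Real.norm_eq_abs, abs_of_pos hq]
  have habsE : ∀ θ : ℝ, ‖Complex.exp (θ * Complex.I)‖ = 1 := by
    intro θ; rw [Complex.norm_exp]; simp
  have hdY : ∀ z : ℂ, q^2 ≤ ‖z‖ → ‖z‖ ≤ (q^2)⁻¹ →
      DifferentiableAt ℂ (cconj y2) z := by
    intro z h1 h2
    have hz0 : z ≠ 0 := by
      intro h; rw [h, norm_zero] at h1; linarith
    have hza : 0 < ‖z‖ := lt_of_lt_of_le hq2pos h1
    apply diff_cconj hz0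
    apply hdy2
    · rw [habsinv z]
      exact (le_inv_comm₀ hza hq2pos).mp h2
    · rw [habsinv z]
      exact inv_anti₀ hq2pos h1
  -- analyticity of the reflection of p on the annulus q ≤ |z| ≤ q⁻¹
  have hPan : AnalyticOnNhd ℂ (cconj p)
      {z : ℂ | q ≤ ‖z‖ ∧ ‖z‖ ≤ q⁻¹} := by
    rintro z ⟨h1, h2⟩
    have hz0 : z ≠ 0 := by
      intro h; rw [h, norm_zero] at h1; linarith
    have hza : 0 < ‖z‖ := lt_of_lt_of_le hq h1
    apply analyticAt_cconj hz0
    have hmem : (starRingEnd ℂ) (z⁻¹) ∈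
        {z : ℂ | q ≤ ‖z‖ ∧ ‖z‖ ≤ q⁻¹} := by
      rw [Set.mem_setOf_eq, habsinv z]
      exact ⟨(le_inv_comm₀ hza hq).mp h2, inv_anti₀ hq h1⟩
    exact ((hp _ hmem).eventually_analyticAt).mono fun w hw => hw.differentiableAt
  -- p is real (a.e.) on the unit circle, hence `cconj p = p` there frequently,
  -- hence everywhere on the annulus by the identity theorem
  have hπ3 : (3:ℝ) < Real.pi := Real.pi_gt_three
  have hfreqR : ∃ᶠ (θ : ℝ) in nhdsWithin (1:ℝ) ({(1:ℝ)}ᶜ : Set ℝ),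
      (p (Complex.exp (θ * Complex.I))).im = 0 := by
    have hae : ∀ᵐ θ : ℝ ∂(volume.restrict (Set.Ioc (0:ℝ) (2 * Real.pi))),
        (p (Complex.exp (θ * Complex.I))).im = 0 := hppos.mono fun θ h => h.2
    have h0 : volume ({θ : ℝ | ¬ (p (Complex.exp (θ * Complex.I))).im = 0}
        ∩ Set.Ioc 0 (2*Real.pi)) = 0 := by
      rw [← Measure.restrict_apply' measurableSet_Ioc]
      exact ae_iff.mp hae
    rw [Filter.frequently_iff]
    intro U hU
    rw [Metric.mem_nhdsWithin_iff] at hU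
    obtain ⟨ε, hε, hball⟩ := hU
    set δ := min ε 1 with hδdef
    have hδpos : 0 < δ := lt_min hε one_pos
    have hδle1 : δ ≤ 1 := min_le_right _ _
    have hδleε : δ ≤ ε := min_le_left _ _
    obtain ⟨θ, hθIoo, hθgood⟩ :
        ∃ θ ∈ Set.Ioo (1:ℝ) (1+δ), (p (Complex.exp (θ * Complex.I))).im = 0 := by
      by_contra hcon
      push_neg at hcon
      have hsub : Set.Ioo (1:ℝ) (1+δ)
          ⊆ {θ : ℝ | ¬ (p (Complex.exp (θ * Complex.I))).im = 0}
            ∩ Set.Ioc 0 (2*Real.pi) := by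
        intro θ hθ
        refine ⟨hcon θ hθ, ⟨by linarith [hθ.1], by linarith [hθ.2]⟩⟩
      have hm : volume (Set.Ioo (1:ℝ) (1+δ))
          ≤ volume ({θ : ℝ | ¬ (p (Complex.exp (θ * Complex.I))).im = 0}
            ∩ Set.Ioc 0 (2*Real.pi)) := measure_mono hsub
      rw [h0] at hm
      have hz : volume (Set.Ioo (1:ℝ) (1+δ)) = 0 := le_antisymm hm (zero_le)
      rw [Real.volume_Ioo, ENNReal.ofReal_eq_zero] at hz
      linarith
    refine ⟨θ, ?_, hθgood⟩
    apply hball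
    constructor
    · rw [Metric.mem_ball, Real.dist_eq, abs_of_pos (by linarith [hθIoo.1])]
      linarith [hθIoo.2]
    · exact fun h => absurd (Set.mem_singleton_iff.mp h) (ne_of_gt hθIoo.1)
  have hfreq : ∃ᶠ z in nhdsWithin (Complex.exp ((1:ℝ) * Complex.I))
      ({Complex.exp ((1:ℝ) * Complex.I)}ᶜ : Set ℂ), cconj p z = p z := by
    have htend : Filter.Tendsto (fun θ : ℝ => Complex.exp (θ * Complex.I))
        (nhdsWithin (1:ℝ) ({(1:ℝ)}ᶜ : Set ℝ))
        (nhdsWithin (Complex.exp ((1:ℝ) * Complex.I))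
          ({Complex.exp ((1:ℝ) * Complex.I)}ᶜ : Set ℂ)) := by
      rw [tendsto_nhdsWithin_iff]
      constructor
      · apply Filter.Tendsto.mono_left ?_ nhdsWithin_le_nhds
        exact Continuous.tendsto (by continuity) 1
      · have h1 : ∀ᶠ θ in nhdsWithin (1:ℝ) ({(1:ℝ)}ᶜ : Set ℝ), θ ∈ Metric.ball (1:ℝ) 1 :=
          mem_nhdsWithin_of_mem_nhds (Metric.ball_mem_nhds _ one_pos)
        have h2 : ∀ᶠ θ in nhdsWithin (1:ℝ) ({(1:ℝ)}ᶜ : Set ℝ), θ ∈ ({(1:ℝ)}ᶜ : Set ℝ) :=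
          self_mem_nhdsWithin
        filter_upwards [h1, h2] with θ hb hne1
        simp only [Set.mem_compl_iff, Set.mem_singleton_iff] at hne1 ⊢
        intro heq
        have hone : Complex.exp ((θ:ℂ) * Complex.I - ((1:ℝ):ℂ) * Complex.I) = 1 := by
          rw [Complex.exp_sub, heq, div_self (Complex.exp_ne_zero _)]
        rw [Complex.exp_eq_one_iff] at hone
        obtain ⟨n, hn⟩ := hone
        have hr : θ - 1 = n * (2*Real.pi) := by
          apply_fun Complex.im at hn
          simpa using hn
        have hb' : |θ - 1| < 1 := by rwa [Metric.mem_ball, Real.dist_eq] at hb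
        have hn0 : n = 0 := by
          by_contra hn0
          have h1n : (1:ℝ) ≤ |(n:ℝ)| := by
            rw [← Int.cast_abs]
            exact_mod_cast Int.one_le_abs hn0
          rw [hr, abs_mul] at hb'
          have : |2*Real.pi| = 2*Real.pi := abs_of_pos (by linarith)
          rw [this] at hb'
          nlinarith
        rw [hn0] at hr
        simp at hr
        exact hne1 (by linarith)
    apply htend.frequently
    refine hfreqR.mono fun θ hθ => ?_
    rw [cconj_circle0 p (habsE θ)]
    exact Complex.conj_eq_iff_im.mpr hθ
  have hPeq : Set.EqOn (cconj p) p
      {z : ℂ | q ≤ ‖z‖ ∧ ‖z‖ ≤ q⁻¹} := by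
    apply hPan.eqOn_of_preconnected_of_frequently_eq hp (isPreconnected_annulus hq)
      (show Complex.exp ((1:ℝ) * Complex.I) ∈ _ from
        ⟨by rw [habsE 1]; exact hqle1, by rw [habsE 1]; exact h1leqi⟩)
    exact hfreq
  have hq2le1 : q^2 ≤ 1 := by nlinarith
  -- differentiability of the telescoping functions on the relevant annuli
  have hlin : ∀ z : ℂ, DifferentiableAt ℂ (fun w : ℂ => (q:ℂ)⁻¹ * w) z :=
    fun z => differentiableAt_id.const_mul _
  have hlin2 : ∀ z : ℂ, DifferentiableAt ℂ (fun w : ℂ => (q:ℂ)⁻¹ * ((q:ℂ)⁻¹ * w)) z :=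
    fun z => (differentiableAt_id.const_mul _).const_mul _
  have hr2 : ∀ z : ℂ, ‖(q:ℂ)⁻¹ * ((q:ℂ)⁻¹ * z)‖ = q⁻¹ * (q⁻¹ * ‖z‖) := by
    intro z; rw [habsmul, habsmul]
  have hdiffF : ∀ z : ℂ, q ≤ ‖z‖ → ‖z‖ ≤ 1 →
      DifferentiableAt ℂ (Ff (q:ℂ) p y1 (cconj y2)) z := by
    intro z h1 h2
    have hr := habsmul z
    have b1 : q ≤ q⁻¹ * ‖z‖ := by
      nlinarith [mul_le_mul_of_nonneg_left h1 hqipos.le]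
    have b2 : q⁻¹ * ‖z‖ ≤ q⁻¹ := by
      nlinarith [mul_le_mul_of_nonneg_left h2 hqipos.le]
    have b3 : q^2 ≤ ‖z‖ := le_trans hq2leq h1
    have b4 : ‖z‖ ≤ (q^2)⁻¹ := h2.trans h1leq2i
    have b5 : q^2 ≤ q⁻¹ * ‖z‖ := le_trans hq2leq b1
    have b6 : q⁻¹ * ‖z‖ ≤ (q^2)⁻¹ := b2.trans hqiv
    have b7 : q^2 ≤ q⁻¹ * (q⁻¹ * ‖z‖) := by
      nlinarith [mul_le_mul_of_nonneg_left b5 hqipos.le]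
    have b8 : q⁻¹ * (q⁻¹ * ‖z‖) ≤ (q^2)⁻¹ := by
      rw [hq2i]; nlinarith [mul_le_mul_of_nonneg_left b2 hqipos.le]
    have hp1 : DifferentiableAt ℂ p z := hdp z h1 (h2.trans h1leqi)
    have hp2 : DifferentiableAt ℂ (fun w => p ((q:ℂ)⁻¹ * w)) z :=
      (hdp ((q:ℂ)⁻¹ * z) (by rw [hr]; exact b1) (by rw [hr]; exact b2)).comp z (hlin z)
    have hy1' : DifferentiableAt ℂ y1 z := hdy1 z b3 b4
    have hY1 : DifferentiableAt ℂ (fun w => cconj y2 ((q:ℂ)⁻¹ * w)) z :=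
      (hdY ((q:ℂ)⁻¹ * z) (by rw [hr]; exact b5) (by rw [hr]; exact b6)).comp z (hlin z)
    have hY2 : DifferentiableAt ℂ (fun w => cconj y2 ((q:ℂ)⁻¹ * ((q:ℂ)⁻¹ * w))) z :=
      (hdY ((q:ℂ)⁻¹ * ((q:ℂ)⁻¹ * z)) (by rw [hr2 z]; exact b7)
        (by rw [hr2 z]; exact b8)).comp (g := cconj y2) z (hlin2 z)
    unfold Ff F1f F2f F3f
    exact ((((hp1.mul hy1').mul hY1).div_const _).add
      (((hp2.mul hy1').mul hY1).div_const _)).add ((((hp2.mul hy1').mul hY2).div_const _).neg)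
  have hdiffF3 : ∀ z : ℂ, q^2 ≤ ‖z‖ → ‖z‖ ≤ 1 →
      DifferentiableAt ℂ (F3f (q:ℂ) p y1 (cconj y2)) z := by
    intro z h1 h2
    have hr := habsmul z
    have c1 : q ≤ q⁻¹ * ‖z‖ := by
      nlinarith [mul_le_mul_of_nonneg_left h1 hqipos.le]
    have c2 : q⁻¹ * ‖z‖ ≤ q⁻¹ := by
      nlinarith [mul_le_mul_of_nonneg_left h2 hqipos.le]
    have c3 : q^2 ≤ q⁻¹ * (q⁻¹ * ‖z‖) := by
      nlinarith [mul_le_mul_of_nonneg_left (mul_le_mul_of_nonneg_left h1 hqipos.le) hqipos.le]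
    have c4 : q⁻¹ * (q⁻¹ * ‖z‖) ≤ (q^2)⁻¹ := by
      rw [hq2i]
      nlinarith [mul_le_mul_of_nonneg_left (mul_le_mul_of_nonneg_left h2 hqipos.le) hqipos.le]
    have hp2 : DifferentiableAt ℂ (fun w => p ((q:ℂ)⁻¹ * w)) z :=
      (hdp ((q:ℂ)⁻¹ * z) (by rw [hr]; exact c1) (by rw [hr]; exact c2)).comp z (hlin z)
    have hy1' : DifferentiableAt ℂ y1 z := hdy1 z h1 (h2.trans h1leq2i)
    have hY2 : DifferentiableAt ℂ (fun w => cconj y2 ((q:ℂ)⁻¹ * ((q:ℂ)⁻¹ * w))) z :=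
      (hdY ((q:ℂ)⁻¹ * ((q:ℂ)⁻¹ * z)) (by rw [hr2 z]; exact c3)
        (by rw [hr2 z]; exact c4)).comp (g := cconj y2) z (hlin2 z)
    unfold F3f
    exact ((((hp2.mul hy1').mul hY2).div_const _)).neg
  -- continuity ⇒ integrability of the four pieces
  have hE : Continuous fun θ : ℝ => Complex.exp (θ * Complex.I) := by continuity
  have habsq : ‖(q:ℂ)‖ = q := by rw [Complex.norm_real, Real.norm_eq_abs, abs_of_pos hq]
  have hiA : IntervalIntegrable
      (fun θ : ℝ => Ff (q:ℂ) p y1 (cconj y2) (Complex.exp (θ * Complex.I)))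
      volume 0 (2*Real.pi) := by
    apply Continuous.intervalIntegrable
    rw [continuous_iff_continuousAt]; intro θ
    exact ContinuousAt.comp (g := Ff (q:ℂ) p y1 (cconj y2))
      (f := fun θ : ℝ => Complex.exp (θ * Complex.I))
      ((hdiffF _ (by rw [habsE]; exact hqle1) (le_of_eq (habsE θ))).continuousAt)
      hE.continuousAt
  have hiB : IntervalIntegrable
      (fun θ : ℝ => Ff (q:ℂ) p y1 (cconj y2) ((q:ℂ) * Complex.exp (θ * Complex.I)))
      volume 0 (2*Real.pi) := by
    apply Continuous.intervalIntegrable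
    rw [continuous_iff_continuousAt]; intro θ
    have habs : ‖(q:ℂ) * Complex.exp (θ * Complex.I)‖ = q := by
      rw [norm_mul, habsE, mul_one, habsq]
    exact ContinuousAt.comp (g := Ff (q:ℂ) p y1 (cconj y2))
      (f := fun θ : ℝ => (q:ℂ) * Complex.exp (θ * Complex.I))
      ((hdiffF _ (le_of_eq habs.symm) (by rw [habs]; exact hqle1)).continuousAt)
      (continuous_const.mul hE).continuousAt
  have hiC : IntervalIntegrable
      (fun θ : ℝ => F3f (q:ℂ) p y1 (cconj y2) ((q:ℂ) * Complex.exp (θ * Complex.I)))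
      volume 0 (2*Real.pi) := by
    apply Continuous.intervalIntegrable
    rw [continuous_iff_continuousAt]; intro θ
    have habs : ‖(q:ℂ) * Complex.exp (θ * Complex.I)‖ = q := by
      rw [norm_mul, habsE, mul_one, habsq]
    exact ContinuousAt.comp (g := F3f (q:ℂ) p y1 (cconj y2))
      (f := fun θ : ℝ => (q:ℂ) * Complex.exp (θ * Complex.I))
      ((hdiffF3 _ (by rw [habs]; exact hq2leq) (by rw [habs]; exact hqle1)).continuousAt)
      (continuous_const.mul hE).continuousAt
  have hiD : IntervalIntegrable
      (fun θ : ℝ => F3f (q:ℂ) p y1 (cconj y2) ((q:ℂ) * ((q:ℂ) * Complex.exp (θ * Complex.I))))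
      volume 0 (2*Real.pi) := by
    apply Continuous.intervalIntegrable
    rw [continuous_iff_continuousAt]; intro θ
    have habs : ‖(q:ℂ) * ((q:ℂ) * Complex.exp (θ * Complex.I))‖ = q^2 := by
      rw [norm_mul, norm_mul, habsE, mul_one, habsq, sq]
    exact ContinuousAt.comp (g := F3f (q:ℂ) p y1 (cconj y2))
      (f := fun θ : ℝ => (q:ℂ) * ((q:ℂ) * Complex.exp (θ * Complex.I)))
      ((hdiffF3 _ (le_of_eq habs.symm) (by rw [habs]; exact hq2le1)).continuousAt)
      (continuous_const.mul (continuous_const.mul hE)).continuousAt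
  -- the a.e. reality of ω on the circle
  have hωae : ∀ᵐ θ : ℝ, θ ∈ Set.Ioc (0:ℝ) (2*Real.pi) →
      (ω (Complex.exp (θ * Complex.I))).im = 0 :=
    (ae_restrict_iff' measurableSet_Ioc).mp (hωpos.mono fun θ h => h.2)
  -- the key computation
  have key : ((l1:ℂ) - (l2:ℂ)) * (∫ θ in (0:ℝ)..(2 * Real.pi),
      y1 (Complex.exp (θ * Complex.I)) *
        (starRingEnd ℂ) (y2 (Complex.exp (θ * Complex.I))) *
        ω (Complex.exp (θ * Complex.I))) = 0 := by
    rw [← intervalIntegral.integral_const_mul]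
    have step2 : (∫ θ in (0:ℝ)..(2*Real.pi), ((l1:ℂ) - (l2:ℂ)) *
          (y1 (Complex.exp (θ * Complex.I)) *
            (starRingEnd ℂ) (y2 (Complex.exp (θ * Complex.I))) *
            ω (Complex.exp (θ * Complex.I))))
        = ∫ θ in (0:ℝ)..(2*Real.pi),
            Gf (q:ℂ) p y1 (cconj y2) (cconj p) (Complex.exp (θ * Complex.I)) := by
      apply intervalIntegral.integral_congr_ae
      filter_upwards [hωae] with θ hθ hmem
      rw [Set.uIoc_of_le (by positivity : (0:ℝ) ≤ 2*Real.pi)] at hmem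
      have him := hθ hmem
      have hz1 : ‖Complex.exp (θ * Complex.I)‖ = 1 := habsE θ
      have hz0 : Complex.exp ((θ:ℂ) * Complex.I) ≠ 0 := Complex.exp_ne_zero _
      have hA1 : A1fun (q:ℂ) p y1 (Complex.exp (θ * Complex.I))
          = (l1:ℂ) * ω (Complex.exp (θ * Complex.I)) * y1 (Complex.exp (θ * Complex.I)) := by
        rw [← A1_eq_Tq (q:ℂ) hq0c hq1c p y1 _ hz0]
        exact heq1 _ (by rw [hz1]; exact hqle1) (by rw [hz1]; exact h1leqi)
      have hA2 : A1fun (q:ℂ) p y2 (Complex.exp (θ * Complex.I))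
          = (l2:ℂ) * ω (Complex.exp (θ * Complex.I)) * y2 (Complex.exp (θ * Complex.I)) := by
        rw [← A1_eq_Tq (q:ℂ) hq0c hq1c p y2 _ hz0]
        exact heq2 _ (by rw [hz1]; exact hqle1) (by rw [hz1]; exact h1leqi)
      have hωreal : (starRingEnd ℂ) (ω (Complex.exp (θ * Complex.I)))
          = ω (Complex.exp (θ * Complex.I)) := Complex.conj_eq_iff_im.mpr him
      simp only [Gf]
      rw [← conj_A1 q p y2 hz1, hA1, hA2, cconj_circle0 y2 hz1]
      simp only [map_mul, hωreal, Complex.conj_ofReal]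
      ring
    rw [step2]
    have step3 : (∫ θ in (0:ℝ)..(2*Real.pi),
          Gf (q:ℂ) p y1 (cconj y2) (cconj p) (Complex.exp (θ * Complex.I)))
        = ∫ θ in (0:ℝ)..(2*Real.pi),
            Gf (q:ℂ) p y1 (cconj y2) p (Complex.exp (θ * Complex.I)) := by
      apply intervalIntegral.integral_congr
      intro θ _
      have hz1 : ‖Complex.exp (θ * Complex.I)‖ = 1 := habsE θ
      have m1 : Complex.exp ((θ:ℂ) * Complex.I)
          ∈ {z : ℂ | q ≤ ‖z‖ ∧ ‖z‖ ≤ q⁻¹} :=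
        ⟨by rw [hz1]; exact hqle1, by rw [hz1]; exact h1leqi⟩
      have m2 : (q:ℂ)⁻¹ * Complex.exp ((θ:ℂ) * Complex.I)
          ∈ {z : ℂ | q ≤ ‖z‖ ∧ ‖z‖ ≤ q⁻¹} := by
        constructor
        · rw [habsmul, hz1, mul_one]; exact hqleqi
        · rw [habsmul, hz1, mul_one]
      simp only [Gf]
      rw [hPeq m1, hPeq m2]
    rw [step3]
    have step4 : (∫ θ in (0:ℝ)..(2*Real.pi),
          Gf (q:ℂ) p y1 (cconj y2) p (Complex.exp (θ * Complex.I)))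
        = ∫ θ in (0:ℝ)..(2*Real.pi),
            (Ff (q:ℂ) p y1 (cconj y2) (Complex.exp (θ * Complex.I))
              - Ff (q:ℂ) p y1 (cconj y2) ((q:ℂ) * Complex.exp (θ * Complex.I))
              + F3f (q:ℂ) p y1 (cconj y2) ((q:ℂ) * Complex.exp (θ * Complex.I))
              - F3f (q:ℂ) p y1 (cconj y2) ((q:ℂ) * ((q:ℂ) * Complex.exp (θ * Complex.I)))) :=
      intervalIntegral.integral_congr fun θ _ => telescope (q:ℂ) hq0c p y1 (cconj y2) _
    rw [step4]
    rw [intervalIntegral.integral_sub ((hiA.sub hiB).add hiC) hiD,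
      intervalIntegral.integral_add (hiA.sub hiB) hiC,
      intervalIntegral.integral_sub hiA hiB]
    have e1 : (∫ θ in (0:ℝ)..(2*Real.pi),
          Ff (q:ℂ) p y1 (cconj y2) (Complex.exp (θ * Complex.I)))
        = ∫ θ in (0:ℝ)..(2*Real.pi),
            Ff (q:ℂ) p y1 (cconj y2) ((q:ℂ) * Complex.exp (θ * Complex.I)) := by
      have h := annulus_avg hq hqle1 (Ff (q:ℂ) p y1 (cconj y2)) hdiffF
      simpa using h
    have e2 : (∫ θ in (0:ℝ)..(2*Real.pi),
          F3f (q:ℂ) p y1 (cconj y2) ((q:ℂ) * Complex.exp (θ * Complex.I)))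
        = ∫ θ in (0:ℝ)..(2*Real.pi),
            F3f (q:ℂ) p y1 (cconj y2) ((q:ℂ) * ((q:ℂ) * Complex.exp (θ * Complex.I))) := by
      have h := annulus_avg hq2pos hq2leq (F3f (q:ℂ) p y1 (cconj y2))
        (fun z h1 h2 => hdiffF3 z h1 (h2.trans hqle1))
      rw [h]
      apply intervalIntegral.integral_congr
      intro θ _
      have harg : ((q:ℂ) * ((q:ℂ) * Complex.exp (θ * Complex.I)))
          = ((q^2 : ℝ) : ℂ) * Complex.exp (θ * Complex.I) := by
        push_cast
        ring
      simp only [harg]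
    rw [e1, e2]
    ring
  rcases mul_eq_zero.mp key with h | h
  · exact absurd h (sub_ne_zero.mpr (fun h' => hne (by exact_mod_cast h')))
  · rw [h, mul_zero]
end
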